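/- arXiv:1907.12650 — 7 statements merged into one kernel-verified Lean document; each statement's English description precedes it below -/
import Mathlib

section
/- Let λ, μ, c > 0. Let X be a non-negative random variable with probability density f and E[X] < ∞, and let M be a non-negative integrable random variable independent of X. Suppose that min(x, c) · f(x) = (λ/μ) · (P(M + X > x) − P(X > x)) for Lebesgue-almost every x > 0. If P(X ≤ c) > 0 and m_c := E[X · 1{X ≤ c}] / P(X ≤ c) < c, then P(X > c) = ((λ/μ)·E[M] − m_c) / (c − m_c). -/
open MeasureTheory ProbabilityTheory Set

/-!
Integrate the balance equation over `x > 0`. Since `f` is the density of `X`, the left side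
integrates to `E[min(X, c)] = E[X; X ≤ c] + c P(X > c)`; by the layer-cake formula the right side
integrates to `(λ/μ)(E[M + X] - E[X]) = (λ/μ) E[M]`. Writing `E[X; X ≤ c] = m_c (1 - P(X > c))`
turns this into a linear equation for `P(X > c)`, solvable because `m_c ≠ c`.
-/

section Tail

variable {α : Type*} [MeasurableSpace α] {μ : Measure α} [IsFiniteMeasure μ] {f g : α → ℝ}

theorem MeasureTheory.Integrable.integrableOn_Ioi_meas_lt (hf : Integrable f μ)
    (hf0 : 0 ≤ᵐ[μ] f) :
    IntegrableOn (fun t : ℝ => (μ {a | t < f a}).toReal) (Ioi 0) := by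
  have hmeas : Measurable fun t : ℝ => (μ {a | t < f a}).toReal :=
    Measurable.ennreal_toReal <| Antitone.measurable fun _ _ hst ↦
      measure_mono fun _ (h : _ < f _) ↦ hst.trans_lt h
  refine ⟨hmeas.aestronglyMeasurable, ?_⟩
  simp only [HasFiniteIntegral, Real.enorm_eq_ofReal ENNReal.toReal_nonneg,
    ENNReal.ofReal_toReal (measure_ne_top _ _)]
  rw [← lintegral_eq_lintegral_meas_lt μ hf0 hf.aemeasurable]
  exact hf.lintegral_lt_top

theorem MeasureTheory.Integrable.integral_Ioi_meas_lt_sub (hf : Integrable f μ)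
    (hf0 : 0 ≤ᵐ[μ] f) (hg : Integrable g μ) (hg0 : 0 ≤ᵐ[μ] g) :
    ∫ t in Ioi 0, ((μ {a | t < f a}).toReal - (μ {a | t < g a}).toReal)
      = ∫ a, f a ∂μ - ∫ a, g a ∂μ := by
  rw [integral_sub (hf.integrableOn_Ioi_meas_lt hf0) (hg.integrableOn_Ioi_meas_lt hg0),
    hf.integral_eq_integral_meas_lt hf0, hg.integral_eq_integral_meas_lt hg0]
  rfl

end Tail

theorem MeasureTheory.Measure.restrict_Ioi_zero_eq_self {ν : Measure ℝ} (hν : ν ≪ volume)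
    (h0 : ∀ᵐ x ∂ν, 0 ≤ x) : ν.restrict (Ioi 0) = ν := by
  rw [Measure.restrict_congr_set (hν.ae_eq Ioi_ae_eq_Ici)]
  exact Measure.restrict_eq_self_of_ae_mem h0

section Density

variable {Ω : Type*} [MeasurableSpace Ω] {P : Measure Ω}

theorem integral_comp_eq_setIntegral_Ioi_mul_density {X : Ω → ℝ} (hX : Measurable X)
    (hX0 : ∀ᵐ ω ∂P, 0 ≤ X ω)
    {f : ℝ → ℝ} (hf : Measurable f) (hf0 : ∀ y, 0 ≤ f y)
    (hdens : Measure.map X P = volume.withDensity (fun y => ENNReal.ofReal (f y)))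
    {g : ℝ → ℝ} (hg : Measurable g) :
    ∫ ω, g (X ω) ∂P = ∫ x in Ioi 0, g x * f x := by
  have hsupp : (P.map X).restrict (Ioi 0) = P.map X :=
    Measure.restrict_Ioi_zero_eq_self (hdens ▸ withDensity_absolutelyContinuous _ _)
      ((ae_map_iff hX.aemeasurable measurableSet_Ici).mpr hX0)
  rw [← integral_map hX.aemeasurable hg.aestronglyMeasurable, ← hsupp, hdens,
    setIntegral_withDensity_eq_setIntegral_toReal_smul hf.ennreal_ofReal
      (ae_of_all _ fun _ ↦ ENNReal.ofReal_lt_top) _ measurableSet_Ioi]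
  simp only [ENNReal.toReal_ofReal (hf0 _), smul_eq_mul, mul_comm]

theorem integral_min_const_eq_setIntegral_add [IsFiniteMeasure P] {X : Ω → ℝ}
    (hX : Measurable X) (hXint : Integrable X P) (c : ℝ) :
    ∫ ω, min (X ω) c ∂P = ∫ ω in {ω | X ω ≤ c}, X ω ∂P + c * (P {ω | c < X ω}).toReal := by
  have hs : MeasurableSet {ω | X ω ≤ c} := hX measurableSet_Iic
  have hcompl : {ω | X ω ≤ c}ᶜ = {ω | c < X ω} := by ext; simp
  have hmin : Integrable (fun ω ↦ min (X ω) c) P := hXint.inf (integrable_const c)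
  rw [← integral_add_compl hs hmin, hcompl]
  congr 1
  · exact setIntegral_congr_fun hs fun ω hω ↦ min_eq_left hω
  · rw [setIntegral_congr_fun (s := {ω | c < X ω}) (hX measurableSet_Ioi)
      fun ω (hω : c < X ω) ↦ min_eq_right hω.le,
      setIntegral_const, smul_eq_mul, mul_comm, Measure.real]

/-- Also true when `P s = 0`, both sides then being `0`. -/
theorem setIntegral_div_measure_toReal_mul [IsFiniteMeasure P] (X : Ω → ℝ) (s : Set Ω) :
    (∫ ω in s, X ω ∂P) / (P s).toReal * (P s).toReal = ∫ ω in s, X ω ∂P := by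
  rcases eq_or_ne (P s) 0 with hs | hs
  · simp [Measure.restrict_eq_zero.mpr hs]
  · exact div_mul_cancel₀ _ (ENNReal.toReal_ne_zero.mpr ⟨hs, measure_ne_top _ _⟩)

end Density

theorem threshold_storage_exceedance_probability_general
    {Ω : Type*} [MeasurableSpace Ω] (P : Measure Ω) [IsProbabilityMeasure P]
    (lam mu c : ℝ)
    (X M : Ω → ℝ) (hX : Measurable X)
    (hX0 : ∀ ω, 0 ≤ X ω) (hM0 : ∀ ω, 0 ≤ M ω)
    (hXint : Integrable X P) (hMint : Integrable M P)
    (f : ℝ → ℝ) (hf : Measurable f) (hf0 : ∀ y, 0 ≤ f y)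
    (hdens : Measure.map X P = volume.withDensity (fun y => ENNReal.ofReal (f y)))
    (heq : ∀ᵐ x ∂(volume.restrict (Set.Ioi (0 : ℝ))),
      min x c * f x
        = (lam / mu) * ((P {ω | x < M ω + X ω}).toReal - (P {ω | x < X ω}).toReal))
    (hmc : (∫ ω in {ω | X ω ≤ c}, X ω ∂P) / (P {ω | X ω ≤ c}).toReal < c) :
    (P {ω | c < X ω}).toReal
      = ((lam / mu) * (∫ ω, M ω ∂P)
            - (∫ ω in {ω | X ω ≤ c}, X ω ∂P) / (P {ω | X ω ≤ c}).toReal)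
        / (c - (∫ ω in {ω | X ω ≤ c}, X ω ∂P) / (P {ω | X ω ≤ c}).toReal) := by
  set mc := (∫ ω in {ω | X ω ≤ c}, X ω ∂P) / (P {ω | X ω ≤ c}).toReal
  have hbalance : ∫ ω in {ω | X ω ≤ c}, X ω ∂P + c * (P {ω | c < X ω}).toReal
      = lam / mu * ∫ ω, M ω ∂P :=
    calc _ = ∫ ω, min (X ω) c ∂P := (integral_min_const_eq_setIntegral_add hX hXint c).symm
      _ = ∫ x in Ioi 0, min x c * f x :=
        integral_comp_eq_setIntegral_Ioi_mul_density hX (ae_of_all _ hX0) hf hf0 hdens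
          (measurable_id.min measurable_const)
      _ = ∫ x in Ioi 0,
            lam / mu * ((P {ω | x < M ω + X ω}).toReal - (P {ω | x < X ω}).toReal) :=
        integral_congr_ae heq
      _ = lam / mu * ((∫ ω, M ω + X ω ∂P) - ∫ ω, X ω ∂P) := by
        have hsum : Integrable (fun ω ↦ M ω + X ω) P := hMint.add hXint
        rw [integral_const_mul, hsum.integral_Ioi_meas_lt_sub
          (ae_of_all _ fun ω ↦ add_nonneg (hM0 ω) (hX0 ω)) hXint (ae_of_all _ hX0)]
      _ = lam / mu * ∫ ω, M ω ∂P := by rw [integral_add hMint hXint]; ring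
  have htotal : (P {ω | X ω ≤ c}).toReal + (P {ω | c < X ω}).toReal = 1 := by
    simpa [Measure.real, compl_ofPred] using
      measureReal_add_measureReal_compl (μ := P) (s := {ω | X ω ≤ c}) (hX measurableSet_Iic)
  rw [← setIntegral_div_measure_toReal_mul X] at hbalance
  rw [eq_div_iff (sub_ne_zero.mpr hmc.ne'), ← hbalance]
  linear_combination (-mc) * htotal

/-- Exceedance probability of the stationary `c`-threshold storage process in terms of the
truncated mean `m_c = E[X | X ≤ c]`:
`P(X > c) = ((λ/μ)E[M] − m_c)/(c − m_c)`. -/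
theorem threshold_storage_exceedance_probability
    {Ω : Type*} [MeasurableSpace Ω] (P : Measure Ω) [IsProbabilityMeasure P]
    (lam mu c : ℝ) (hlam : 0 < lam) (hmu : 0 < mu) (hc : 0 < c)
    (X M : Ω → ℝ) (hX : Measurable X) (hM : Measurable M)
    (hX0 : ∀ ω, 0 ≤ X ω) (hM0 : ∀ ω, 0 ≤ M ω)
    (hXint : Integrable X P) (hMint : Integrable M P)
    (hindep : IndepFun X M P)
    (f : ℝ → ℝ) (hf : Measurable f) (hf0 : ∀ y, 0 ≤ f y)
    (hdens : Measure.map X P = volume.withDensity (fun y => ENNReal.ofReal (f y)))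
    (heq : ∀ᵐ x ∂(volume.restrict (Set.Ioi (0 : ℝ))),
      min x c * f x
        = (lam / mu) * ((P {ω | x < M ω + X ω}).toReal - (P {ω | x < X ω}).toReal))
    (hpos : 0 < (P {ω | X ω ≤ c}).toReal)
    (hmc : (∫ ω in {ω | X ω ≤ c}, X ω ∂P) / (P {ω | X ω ≤ c}).toReal < c) :
    (P {ω | c < X ω}).toReal
      = ((lam / mu) * (∫ ω, M ω ∂P)
            - (∫ ω in {ω | X ω ≤ c}, X ω ∂P) / (P {ω | X ω ≤ c}).toReal)
        / (c - (∫ ω in {ω | X ω ≤ c}, X ω ∂P) / (P {ω | X ω ≤ c}).toReal) :=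
  threshold_storage_exceedance_probability_general P lam mu c X M hX hX0 hM0 hXint hMint f hf hf0
    hdens heq hmc
end

section
/- Let λ, μ, c > 0. Let X be a non-negative random variable with probability density f and E[X] < ∞, and let M be a non-negative integrable random variable independent of X. Suppose that min(x, c) · f(x) = (λ/μ) · (P(M + X > x) − P(X > x)) for Lebesgue-almost every x > 0. Then E[X · 1{X ≤ c}] = (λ/μ) · (E[min(X + M, c)] − E[min(X, c)]), and consequently E[min(X + M, c)] = (μ/λ)·E[X · 1{X ≤ c}] + (λ/μ)·E[M]. Moreover, if P(X + M ≤ c) > 0 and m′_c := E[(X + M)·1{X + M ≤ c}] / P(X + M ≤ c) < c, then P(X + M > c) = ((μ/λ)·E[X · 1{X ≤ c}] + (λ/μ)·E[M] − m′_c) / (c − m′_c). -/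
/-!
Integrating the balance equation `min x c · f x = (λ/μ)(P(X + M > x) − P(X > x))` over `(0, c)`
and over `(0, ∞)`, the left side becomes `E[X·1{X ≤ c}]`, resp. `E[min(X, c)]`, by the density of
`X`, and the right side becomes `(λ/μ)(E[min(X + M, c)] − E[min(X, c)])`, resp. `(λ/μ)E[M]`, by the
layer-cake formula. The exceedance probability is then read off
`E[min(Y, c)] = m′_c · P(Y ≤ c) + c · P(Y > c)` for `Y = X + M`.
-/

open MeasureTheory Filter ProbabilityTheory Set
open scoped ENNReal

section LayerCake

variable {Ω : Type*} [MeasurableSpace Ω] {P : Measure Ω} {Y : Ω → ℝ}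

lemma integrableOn_Ioi_measureReal_lt (hY0 : 0 ≤ᵐ[P] Y) (hYint : Integrable Y P) :
    IntegrableOn (fun t => P.real {ω | t < Y ω}) (Ioi 0) := by
  have hmeas : Measurable fun t : ℝ => P {ω | t < Y ω} :=
    Antitone.measurable fun s t hst => measure_mono fun ω h => hst.trans_lt h
  refine integrable_toReal_of_lintegral_ne_top hmeas.aemeasurable ?_
  rw [← lintegral_eq_lintegral_meas_lt P hY0 hYint.aemeasurable]
  exact hYint.lintegral_lt_top.ne

lemma integral_min_eq_setIntegral_Ioo_measureReal_lt [IsFiniteMeasure P] {c : ℝ} (hc : 0 ≤ c)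
    (hY0 : 0 ≤ᵐ[P] Y) (hYint : Integrable Y P) :
    ∫ ω, min (Y ω) c ∂P = ∫ t in Ioo 0 c, P.real {ω | t < Y ω} := by
  have hmin_int : Integrable (fun ω => min (Y ω) c) P := hYint.inf (integrable_const c)
  have hmin0 : 0 ≤ᵐ[P] fun ω => min (Y ω) c := hY0.mono fun ω h => le_min h hc
  rw [hmin_int.integral_eq_integral_meas_lt hmin0,
    setIntegral_eq_of_subset_of_forall_sdiff_eq_zero measurableSet_Ioi Ioo_subset_Ioi_self
      fun t ht => ?_]
  · refine setIntegral_congr_fun measurableSet_Ioo fun t ht => ?_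
    simp only [lt_min_iff, ht.2, and_true]
  · have hct : c ≤ t := not_lt.1 fun h => ht.2 ⟨ht.1, h⟩
    have hempty : {ω | t < min (Y ω) c} = ∅ :=
      eq_empty_of_forall_notMem fun ω h => (h.trans_le (min_le_right _ _)).not_ge hct
    rw [hempty, measureReal_empty]

lemma integral_min_eq_setIntegral_add_mul_measureReal [IsFiniteMeasure P] (hY : Measurable Y)
    (hYint : Integrable Y P) (c : ℝ) :
    ∫ ω, min (Y ω) c ∂P = ∫ ω in {ω | Y ω ≤ c}, Y ω ∂P + c * P.real {ω | c < Y ω} := by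
  have hS : MeasurableSet {ω | Y ω ≤ c} := measurableSet_le hY measurable_const
  have hmin_int : Integrable (fun ω => min (Y ω) c) P := hYint.inf (integrable_const c)
  rw [← integral_add_compl hS hmin_int]
  congr 1
  · exact setIntegral_congr_fun hS fun ω hω => min_eq_left hω
  · rw [setIntegral_congr_fun hS.compl fun ω (hω : ¬Y ω ≤ c) => min_eq_right (not_le.1 hω).le,
      setIntegral_const, smul_eq_mul, mul_comm, compl_ofPred]
    simp only [not_le]

/-- The truncated mean `E[Y | Y ≤ c]` (the paper's `m′_c` for `Y = X + M`); it is `0` when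
`P(Y ≤ c) = 0`. -/
noncomputable def truncatedMean (P : Measure Ω) (Y : Ω → ℝ) (c : ℝ) : ℝ :=
  (∫ ω in {ω | Y ω ≤ c}, Y ω ∂P) / P.real {ω | Y ω ≤ c}

lemma truncatedMean_mul_measureReal [IsFiniteMeasure P] (Y : Ω → ℝ) (c : ℝ) :
    truncatedMean P Y c * P.real {ω | Y ω ≤ c} = ∫ ω in {ω | Y ω ≤ c}, Y ω ∂P := by
  rcases eq_or_ne (P.real {ω | Y ω ≤ c}) 0 with h | h
  · rw [h, mul_zero,
      setIntegral_measure_zero _ ((measureReal_eq_zero_iff (measure_ne_top P _)).1 h)]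
  · exact div_mul_cancel₀ _ h

lemma measureReal_lt_eq_div_sub_truncatedMean [IsProbabilityMeasure P] (hY : Measurable Y)
    (hYint : Integrable Y P) {c : ℝ} (hm : truncatedMean P Y c < c) :
    P.real {ω | c < Y ω}
      = (∫ ω, min (Y ω) c ∂P - truncatedMean P Y c) / (c - truncatedMean P Y c) := by
  have hcompl : P.real {ω | c < Y ω} = 1 - P.real {ω | Y ω ≤ c} := by
    rw [← probReal_compl_eq_one_sub (measurableSet_le hY measurable_const), compl_ofPred]
    simp only [not_le]
  rw [eq_div_iff (sub_pos.2 hm).ne', integral_min_eq_setIntegral_add_mul_measureReal hY hYint,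
    ← truncatedMean_mul_measureReal, hcompl]
  ring

end LayerCake

section Density

variable {Ω : Type*} [MeasurableSpace Ω] {P : Measure Ω} {X : Ω → ℝ} {f : ℝ → ℝ}

lemma setIntegral_preimage_eq_setIntegral_mul_density (hX : Measurable X) (hf : Measurable f)
    (hf0 : ∀ y, 0 ≤ f y) (hdens : P.map X = volume.withDensity fun y => ENNReal.ofReal (f y))
    {g : ℝ → ℝ} (hg : Measurable g) {s : Set ℝ} (hs : MeasurableSet s) :
    ∫ ω in X ⁻¹' s, g (X ω) ∂P = ∫ y in s, g y * f y := by
  rw [← setIntegral_map hs hg.aestronglyMeasurable hX.aemeasurable, hdens,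
    restrict_withDensity hs,
    show (fun y => ENNReal.ofReal (f y)) = fun y => ((f y).toNNReal : ℝ≥0∞) from rfl,
    integral_withDensity_eq_integral_smul hf.real_toNNReal]
  congr 1
  ext y
  simp [NNReal.smul_def, Real.coe_toNNReal _ (hf0 y), mul_comm]

lemma setIntegral_preimage_eq_setIntegral_inter_Ioi_mul_density (hX : Measurable X)
    (hX0 : ∀ ω, 0 ≤ X ω) (hf : Measurable f) (hf0 : ∀ y, 0 ≤ f y)
    (hdens : P.map X = volume.withDensity fun y => ENNReal.ofReal (f y))
    {g : ℝ → ℝ} (hg : Measurable g) (hg0 : g 0 = 0) {s : Set ℝ} (hs : MeasurableSet s) :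
    ∫ ω in X ⁻¹' s, g (X ω) ∂P = ∫ y in s ∩ Ioi 0, g y * f y := by
  rw [← setIntegral_preimage_eq_setIntegral_mul_density hX hf hf0 hdens hg
    (hs.inter measurableSet_Ioi)]
  refine setIntegral_eq_of_subset_of_forall_sdiff_eq_zero (hX hs)
    (preimage_mono inter_subset_left) fun ω hω => ?_
  have hXω : X ω = 0 := le_antisymm (not_lt.1 fun h => hω.2 ⟨hω.1, h⟩) (hX0 ω)
  rw [hXω, hg0]

lemma integral_min_eq_setIntegral_Ioi_mul_density (hX : Measurable X) (hX0 : ∀ ω, 0 ≤ X ω)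
    (hf : Measurable f) (hf0 : ∀ y, 0 ≤ f y)
    (hdens : P.map X = volume.withDensity fun y => ENNReal.ofReal (f y)) {c : ℝ} (hc : 0 ≤ c) :
    ∫ ω, min (X ω) c ∂P = ∫ y in Ioi 0, min y c * f y := by
  simpa only [preimage_univ, Measure.restrict_univ, univ_inter] using
    setIntegral_preimage_eq_setIntegral_inter_Ioi_mul_density hX hX0 hf hf0 hdens
      (g := fun y => min y c) (measurable_id.min measurable_const) (min_eq_left hc)
      MeasurableSet.univ

lemma setIntegral_le_eq_setIntegral_Ioo_mul_density (hX : Measurable X) (hX0 : ∀ ω, 0 ≤ X ω)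
    (hf : Measurable f) (hf0 : ∀ y, 0 ≤ f y)
    (hdens : P.map X = volume.withDensity fun y => ENNReal.ofReal (f y)) (c : ℝ) :
    ∫ ω in {ω | X ω ≤ c}, X ω ∂P = ∫ y in Ioo 0 c, y * f y := by
  rw [← integral_Ioc_eq_integral_Ioo, ← Ioi_inter_Iic, inter_comm]
  exact setIntegral_preimage_eq_setIntegral_inter_Ioi_mul_density hX hX0 hf hf0 hdens
    measurable_id' rfl measurableSet_Iic

end Density

theorem threshold_storage_jump_added_exceedance_general
    {Ω : Type*} [MeasurableSpace Ω] (P : Measure Ω) [IsProbabilityMeasure P]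
    (lam mu c : ℝ) (hlam : 0 < lam) (hmu : 0 < mu) (hc : 0 < c)
    (X M : Ω → ℝ) (hX : Measurable X) (hM : Measurable M)
    (hX0 : ∀ ω, 0 ≤ X ω) (hM0 : ∀ ω, 0 ≤ M ω)
    (hXint : Integrable X P) (hMint : Integrable M P)
    (f : ℝ → ℝ) (hf : Measurable f) (hf0 : ∀ y, 0 ≤ f y)
    (hdens : Measure.map X P = volume.withDensity (fun y => ENNReal.ofReal (f y)))
    (heq : ∀ᵐ x ∂(volume.restrict (Set.Ioi (0 : ℝ))),
      min x c * f x
        = (lam / mu) * ((P {ω | x < M ω + X ω}).toReal - (P {ω | x < X ω}).toReal)) :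
    (∫ ω in {ω | X ω ≤ c}, X ω ∂P
        = (lam / mu) * ((∫ ω, min (X ω + M ω) c ∂P) - ∫ ω, min (X ω) c ∂P))
    ∧ (∫ ω, min (X ω + M ω) c ∂P
        = (mu / lam) * (∫ ω in {ω | X ω ≤ c}, X ω ∂P) + (lam / mu) * ∫ ω, M ω ∂P)
    ∧ (0 < (P {ω | X ω + M ω ≤ c}).toReal →
        (∫ ω in {ω | X ω + M ω ≤ c}, (X ω + M ω) ∂P) / (P {ω | X ω + M ω ≤ c}).toReal < c →
        (P {ω | c < X ω + M ω}).toReal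
          = ((mu / lam) * (∫ ω in {ω | X ω ≤ c}, X ω ∂P) + (lam / mu) * (∫ ω, M ω ∂P)
                - (∫ ω in {ω | X ω + M ω ≤ c}, (X ω + M ω) ∂P)
                  / (P {ω | X ω + M ω ≤ c}).toReal)
            / (c - (∫ ω in {ω | X ω + M ω ≤ c}, (X ω + M ω) ∂P)
                  / (P {ω | X ω + M ω ≤ c}).toReal)) := by
  simp only [← measureReal_def, add_comm (M _) (X _)] at heq ⊢
  have hX0' : 0 ≤ᵐ[P] X := Eventually.of_forall hX0
  have hY0 : 0 ≤ᵐ[P] fun ω => X ω + M ω :=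
    Eventually.of_forall fun ω => add_nonneg (hX0 ω) (hM0 ω)
  have hYint : Integrable (fun ω => X ω + M ω) P := hXint.add hMint
  have hbalance : ∀ s ⊆ Ioi (0 : ℝ), ∫ x in s, min x c * f x
      = lam / mu * ((∫ x in s, P.real {ω | x < X ω + M ω}) - ∫ x in s, P.real {ω | x < X ω}) := by
    intro s hs
    rw [integral_congr_ae (ae_restrict_of_ae_restrict_of_subset hs heq), integral_const_mul,
      integral_sub ((integrableOn_Ioi_measureReal_lt hY0 hYint).mono_set hs)
        ((integrableOn_Ioi_measureReal_lt hX0' hXint).mono_set hs)]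
  have hmin : ∫ ω, min (X ω) c ∂P = lam / mu * ∫ ω, M ω ∂P := by
    rw [integral_min_eq_setIntegral_Ioi_mul_density hX hX0 hf hf0 hdens hc.le,
      hbalance _ subset_rfl, ← hYint.integral_eq_integral_meas_lt hY0,
      ← hXint.integral_eq_integral_meas_lt hX0', integral_add hXint hMint, add_sub_cancel_left]
  have htrunc : ∫ ω in {ω | X ω ≤ c}, X ω ∂P
      = lam / mu * (∫ ω, min (X ω + M ω) c ∂P - ∫ ω, min (X ω) c ∂P) := by
    rw [setIntegral_le_eq_setIntegral_Ioo_mul_density hX hX0 hf hf0 hdens,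
      ← setIntegral_congr_fun (f := fun x => min x c * f x) measurableSet_Ioo
        fun x hx => by dsimp only; rw [min_eq_left hx.2.le],
      hbalance _ Ioo_subset_Ioi_self,
      integral_min_eq_setIntegral_Ioo_measureReal_lt hc.le hY0 hYint,
      integral_min_eq_setIntegral_Ioo_measureReal_lt hc.le hX0' hXint]
  have hjump : ∫ ω, min (X ω + M ω) c ∂P
      = mu / lam * ∫ ω in {ω | X ω ≤ c}, X ω ∂P + lam / mu * ∫ ω, M ω ∂P := by
    rw [htrunc, ← hmin]
    field_simp
    ring
  refine ⟨htrunc, hjump, fun _ hm => ?_⟩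
  rw [← hjump]
  exact measureReal_lt_eq_div_sub_truncatedMean (hX.add hM) hYint hm

/-- For the stationary `c`-threshold storage process:
`E[X·1{X ≤ c}] = (λ/μ)(E[min(X+M,c)] − E[min(X,c)])`, hence
`E[min(X+M,c)] = (μ/λ)E[X·1{X ≤ c}] + (λ/μ)E[M]`, and, with
`m′_c = E[X+M | X+M ≤ c] < c`, the jump-added exceedance probability is
`P(X+M > c) = ((μ/λ)E[X·1{X≤c}] + (λ/μ)E[M] − m′_c)/(c − m′_c)`. -/
theorem threshold_storage_jump_added_exceedance
    {Ω : Type*} [MeasurableSpace Ω] (P : Measure Ω) [IsProbabilityMeasure P]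
    (lam mu c : ℝ) (hlam : 0 < lam) (hmu : 0 < mu) (hc : 0 < c)
    (X M : Ω → ℝ) (hX : Measurable X) (hM : Measurable M)
    (hX0 : ∀ ω, 0 ≤ X ω) (hM0 : ∀ ω, 0 ≤ M ω)
    (hXint : Integrable X P) (hMint : Integrable M P)
    (hindep : IndepFun X M P)
    (f : ℝ → ℝ) (hf : Measurable f) (hf0 : ∀ y, 0 ≤ f y)
    (hdens : Measure.map X P = volume.withDensity (fun y => ENNReal.ofReal (f y)))
    (heq : ∀ᵐ x ∂(volume.restrict (Set.Ioi (0 : ℝ))),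
      min x c * f x
        = (lam / mu) * ((P {ω | x < M ω + X ω}).toReal - (P {ω | x < X ω}).toReal)) :
    (∫ ω in {ω | X ω ≤ c}, X ω ∂P
        = (lam / mu) * ((∫ ω, min (X ω + M ω) c ∂P) - ∫ ω, min (X ω) c ∂P))
    ∧ (∫ ω, min (X ω + M ω) c ∂P
        = (mu / lam) * (∫ ω in {ω | X ω ≤ c}, X ω ∂P) + (lam / mu) * ∫ ω, M ω ∂P)
    ∧ (0 < (P {ω | X ω + M ω ≤ c}).toReal →
        (∫ ω in {ω | X ω + M ω ≤ c}, (X ω + M ω) ∂P) / (P {ω | X ω + M ω ≤ c}).toReal < c →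
        (P {ω | c < X ω + M ω}).toReal
          = ((mu / lam) * (∫ ω in {ω | X ω ≤ c}, X ω ∂P) + (lam / mu) * (∫ ω, M ω ∂P)
                - (∫ ω in {ω | X ω + M ω ≤ c}, (X ω + M ω) ∂P)
                  / (P {ω | X ω + M ω ≤ c}).toReal)
            / (c - (∫ ω in {ω | X ω + M ω ≤ c}, (X ω + M ω) ∂P)
                  / (P {ω | X ω + M ω ≤ c}).toReal)) :=
  threshold_storage_jump_added_exceedance_general P lam mu c hlam hmu hc X M hX hM hX0 hM0 hXint
    hMint f hf hf0 hdens heq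
end

section
/- Let λ, μ, c > 0. Let X be a random variable taking values in (0, c] with probability density f, and let M be a non-negative integrable random variable independent of X. Suppose that x · f(x) = (λ/μ) · (P(M + X > x) − P(X > x)) for Lebesgue-almost every x ∈ (0, c]. Then ((λ + μ)/λ) · E[X] = E[min(M + X, c)], and consequently E[X] ≥ (λ/(λ + μ)) · E[min(M, c)]. -/
open MeasureTheory Filter Real ProbabilityTheory

/-!
By the layer-cake formula, `E[X] = ∫₀^c P(X > t) dt` and `E[min(M + X, c)] = ∫₀^c P(M + X > t) dt`,
while `E[X] = ∫₀^c x f(x) dx` since `X` has density `f` on `(0, c]`. Integrating the balance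
equation over `(0, c]` thus gives `E[X] = (λ/μ) (E[min(M + X, c)] - E[X])`. The inequality
follows from `min(M, c) ≤ min(M + X, c)`.
-/

section

variable {Ω : Type*} [MeasurableSpace Ω] {μ : Measure Ω}

lemma antitone_measureReal_lt [IsFiniteMeasure μ] (Y : Ω → ℝ) :
    Antitone fun t => μ.real {ω | t < Y ω} :=
  fun _ _ hst => measureReal_mono fun _ h => lt_of_le_of_lt hst h

lemma integrableOn_measureReal_lt_Ioc [IsFiniteMeasure μ] (Y : Ω → ℝ) (a b : ℝ) :
    IntegrableOn (fun t => μ.real {ω | t < Y ω}) (Set.Ioc a b) :=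
  ((antitone_measureReal_lt Y).locallyIntegrable.integrableOn_isCompact isCompact_Icc).mono_set
    Set.Ioc_subset_Icc_self

lemma integrable_min_const_of_nonneg [IsFiniteMeasure μ] {Y : Ω → ℝ} (hY : Measurable Y)
    (hY0 : ∀ ω, 0 ≤ Y ω) {c : ℝ} (hc : 0 ≤ c) : Integrable (fun ω => min (Y ω) c) μ :=
  Integrable.of_bound (hY.min measurable_const).aestronglyMeasurable c <| ae_of_all _ fun ω => by
    rw [Real.norm_of_nonneg (le_min (hY0 ω) hc)]
    exact min_le_right _ _

lemma integral_min_eq_integral_Ioc_measureReal_lt [IsFiniteMeasure μ] {Y : Ω → ℝ}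
    (hY : Measurable Y) (hY0 : ∀ ω, 0 ≤ Y ω) {c : ℝ} (hc : 0 ≤ c) :
    ∫ ω, min (Y ω) c ∂μ = ∫ t in Set.Ioc 0 c, μ.real {ω | t < Y ω} := by
  rw [(integrable_min_const_of_nonneg hY hY0 hc).integral_eq_integral_meas_lt
      (ae_of_all _ fun ω => le_min (hY0 ω) hc),
    setIntegral_eq_of_subset_of_forall_sdiff_eq_zero measurableSet_Ioi Set.Ioc_subset_Ioi_self,
    integral_Ioc_eq_integral_Ioo, integral_Ioc_eq_integral_Ioo]
  · refine setIntegral_congr_fun measurableSet_Ioo fun t ht => ?_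
    simp only [lt_min_iff, ht.2, and_true]
  · rintro t ⟨ht0, htc⟩
    have hct : c < t := not_le.1 fun h => htc ⟨ht0, h⟩
    simp [not_lt_of_gt hct]

lemma integral_comp_eq_setIntegral_density_mul {X : Ω → ℝ} (hX : Measurable X)
    {f : ℝ → ℝ} (hf : Measurable f) (hf0 : ∀ y, 0 ≤ f y)
    (hdens : μ.map X = volume.withDensity fun y => ENNReal.ofReal (f y))
    {s : Set ℝ} (hs : MeasurableSet s) (hXs : ∀ ω, X ω ∈ s) {g : ℝ → ℝ} (hg : Measurable g) :
    ∫ ω, g (X ω) ∂μ = ∫ x in s, f x * g x := by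
  have hmap_restrict : (μ.map X).restrict s = μ.map X :=
    Measure.restrict_eq_self_of_ae_mem ((ae_map_iff hX.aemeasurable hs).2 (ae_of_all _ hXs))
  rw [← integral_map hX.aemeasurable hg.aestronglyMeasurable, ← hmap_restrict, hdens]
  refine (setIntegral_withDensity_eq_setIntegral_smul hf.real_toNNReal g hs).trans ?_
  simp only [NNReal.smul_def, Real.coe_toNNReal _ (hf0 _), smul_eq_mul]

end

theorem finite_storage_mean_identity_general
    {Ω : Type*} [MeasurableSpace Ω] (P : Measure Ω) [IsProbabilityMeasure P]
    (lam mu c : ℝ) (hlam : 0 < lam) (hmu : 0 < mu) (hc : 0 < c)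
    (X M : Ω → ℝ) (hX : Measurable X) (hM : Measurable M)
    (hX0 : ∀ ω, 0 < X ω) (hXc : ∀ ω, X ω ≤ c) (hM0 : ∀ ω, 0 ≤ M ω)
    (f : ℝ → ℝ) (hf : Measurable f) (hf0 : ∀ y, 0 ≤ f y)
    (hdens : Measure.map X P = volume.withDensity (fun y => ENNReal.ofReal (f y)))
    (heq : ∀ᵐ x ∂(volume.restrict (Set.Ioc (0 : ℝ) c)),
      x * f x
        = (lam / mu) * ((P {ω | x < M ω + X ω}).toReal - (P {ω | x < X ω}).toReal)) :
    ((lam + mu) / lam) * (∫ ω, X ω ∂P) = ∫ ω, min (M ω + X ω) c ∂P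
    ∧ (lam / (lam + mu)) * (∫ ω, min (M ω) c ∂P) ≤ ∫ ω, X ω ∂P := by
  simp only [← measureReal_def] at heq
  have hMX0 : ∀ ω, 0 ≤ M ω + X ω := fun ω => add_nonneg (hM0 ω) (hX0 ω).le
  have hX_tail : ∫ ω, X ω ∂P = ∫ t in Set.Ioc 0 c, P.real {ω | t < X ω} := by
    simpa only [min_eq_left (hXc _)] using
      integral_min_eq_integral_Ioc_measureReal_lt hX (fun ω => (hX0 ω).le) hc.le
  have hS_tail : ∫ ω, min (M ω + X ω) c ∂P = ∫ t in Set.Ioc 0 c, P.real {ω | t < M ω + X ω} :=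
    integral_min_eq_integral_Ioc_measureReal_lt (hM.add hX) hMX0 hc.le
  have hX_density : ∫ ω, X ω ∂P = ∫ x in Set.Ioc 0 c, x * f x := by
    simpa only [id, mul_comm (f _)] using integral_comp_eq_setIntegral_density_mul hX hf hf0 hdens
      measurableSet_Ioc (fun ω => ⟨hX0 ω, hXc ω⟩) measurable_id
  have hbalance : ∫ ω, X ω ∂P = lam / mu * (∫ ω, min (M ω + X ω) c ∂P - ∫ ω, X ω ∂P) :=
    calc ∫ ω, X ω ∂P = ∫ x in Set.Ioc 0 c, x * f x := hX_density
      _ = ∫ x in Set.Ioc 0 c, lam / mu * (P.real {ω | x < M ω + X ω} - P.real {ω | x < X ω}) :=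
        integral_congr_ae heq
      _ = lam / mu * (∫ ω, min (M ω + X ω) c ∂P - ∫ ω, X ω ∂P) := by
        rw [integral_const_mul, integral_sub (integrableOn_measureReal_lt_Ioc _ _ _)
          (integrableOn_measureReal_lt_Ioc _ _ _), hX_tail, hS_tail]
  have hmean : (lam + mu) / lam * ∫ ω, X ω ∂P = ∫ ω, min (M ω + X ω) c ∂P := by
    field_simp at hbalance ⊢
    linarith
  refine ⟨hmean, ?_⟩
  calc lam / (lam + mu) * ∫ ω, min (M ω) c ∂P
      ≤ lam / (lam + mu) * ∫ ω, min (M ω + X ω) c ∂P := by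
        refine mul_le_mul_of_nonneg_left ?_ (by positivity)
        exact integral_mono (integrable_min_const_of_nonneg hM hM0 hc.le)
          (integrable_min_const_of_nonneg (hM.add hX) hMX0 hc.le)
          fun ω => min_le_min_right c (le_add_of_nonneg_right (hX0 ω).le)
    _ = ∫ ω, X ω ∂P := by
        rw [← hmean]
        field_simp

/-- For the stationary finite-capacity storage process with capacity `c`: if `X ∈ (0,c]`
has density `f` satisfying `x f(x) = (λ/μ)(P(M+X > x) − P(X > x))` a.e. on `(0,c]`, with
`M ≥ 0` integrable and independent of `X`, then `((λ+μ)/λ) E[X] = E[min(M+X, c)]`, and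
consequently `E[X] ≥ (λ/(λ+μ)) E[min(M, c)]`. -/
theorem finite_storage_mean_identity
    {Ω : Type*} [MeasurableSpace Ω] (P : Measure Ω) [IsProbabilityMeasure P]
    (lam mu c : ℝ) (hlam : 0 < lam) (hmu : 0 < mu) (hc : 0 < c)
    (X M : Ω → ℝ) (hX : Measurable X) (hM : Measurable M)
    (hX0 : ∀ ω, 0 < X ω) (hXc : ∀ ω, X ω ≤ c) (hM0 : ∀ ω, 0 ≤ M ω)
    (hMint : Integrable M P)
    (hindep : IndepFun X M P)
    (f : ℝ → ℝ) (hf : Measurable f) (hf0 : ∀ y, 0 ≤ f y)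
    (hdens : Measure.map X P = volume.withDensity (fun y => ENNReal.ofReal (f y)))
    (heq : ∀ᵐ x ∂(volume.restrict (Set.Ioc (0 : ℝ) c)),
      x * f x
        = (lam / mu) * ((P {ω | x < M ω + X ω}).toReal - (P {ω | x < X ω}).toReal)) :
    ((lam + mu) / lam) * (∫ ω, X ω ∂P) = ∫ ω, min (M ω + X ω) c ∂P
    ∧ (lam / (lam + mu)) * (∫ ω, min (M ω) c ∂P) ≤ ∫ ω, X ω ∂P :=
  finite_storage_mean_identity_general P lam mu c hlam hmu hc X M hX hM hX0 hXc hM0 f hf hf0 hdens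
    heq
end

section
/- Let λ, μ, α > 0. Suppose f : (0, ∞) → [0, ∞) is continuous with ∫_0^∞ f(x) dx = 1 and satisfies x · f(x) = (λ/μ) · ∫_0^x e^{−α(x−y)} f(y) dy for all x > 0. Then f(x) = α^{λ/μ} x^{λ/μ − 1} e^{−αx} / Γ(λ/μ) for all x > 0; that is, f is the probability density of the Gamma distribution with shape λ/μ and rate α. -/
open MeasureTheory Real Set

/-!
With `F x = ∫₀ˣ e^{α y} f y dy` the equation reads `x F'(x) = (λ/μ) F(x)`, an Euler equation
whose solutions on `(0, ∞)` are `F x = K x^{λ/μ}`. Hence `f x = (λ/μ) K x^{λ/μ - 1} e^{-α x}`,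
and `∫₀^∞ x^{s-1} e^{-α x} dx = Γ(s) / α^s` together with the normalisation fixes the constant.
-/

theorem hasDerivAt_integral_of_continuousOn_of_isOpen {E : Type*} [NormedAddCommGroup E]
    [NormedSpace ℝ E] [CompleteSpace E] {g : ℝ → E} {s : Set ℝ} {a x : ℝ}
    (hg : IntervalIntegrable g volume a x) (hgc : ContinuousOn g s) (hs : IsOpen s)
    (hx : x ∈ s) : HasDerivAt (fun t => ∫ y in a..t, g y) (g x) x :=
  intervalIntegral.integral_hasDerivAt_right hg
    ⟨s, hs.mem_nhds hx, hgc.aestronglyMeasurable hs.measurableSet⟩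
    (hgc.continuousAt (hs.mem_nhds hx))

theorem eq_mul_rpow_of_mul_hasDerivAt_eq {F F' : ℝ → ℝ} {c : ℝ}
    (hF : ∀ x, 0 < x → HasDerivAt F (F' x) x) (hode : ∀ x, 0 < x → x * F' x = c * F x) :
    ∀ x, 0 < x → F x = F 1 * x ^ c := by
  have hG : ∀ x ∈ Ioi (0 : ℝ), HasDerivAt (fun x => F x * x ^ (-c)) 0 x := by
    intro x (hx : 0 < x)
    have h := (hF x hx).mul (hasDerivAt_rpow_const (p := -c) (Or.inl hx.ne'))
    have hzero : F' x * x ^ (-c) + F x * (-c * x ^ (-c - 1)) = 0 := by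
      rw [rpow_sub_one hx.ne']
      field_simp
      linear_combination x ^ (-c) * hode x hx
    rwa [hzero] at h
  have hconst : ∀ x, 0 < x → F x * x ^ (-c) = F 1 * 1 ^ (-c) := fun x hx =>
    isOpen_Ioi.is_const_of_deriv_eq_zero isPreconnected_Ioi
      (fun y hy => (hG y hy).differentiableAt.differentiableWithinAt)
      (fun y hy => (hG y hy).deriv) (mem_Ioi.2 hx) (mem_Ioi.2 one_pos)
  intro x hx
  have h := hconst x hx
  rw [one_rpow, mul_one, rpow_neg hx.le] at h
  field_simp at h
  linear_combination h

theorem eq_of_integral_Ioi_const_mul_rpow_mul_exp_eq_one {A c α : ℝ} (hc : 0 < c) (hα : 0 < α)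
    (h : ∫ x in Ioi 0, A * (x ^ (c - 1) * exp (-α * x)) = 1) : A = α ^ c / Gamma c := by
  simp_rw [neg_mul] at h
  rw [integral_const_mul, integral_rpow_mul_exp_neg_mul_Ioi hc hα, div_rpow zero_le_one hα.le,
    one_rpow] at h
  have := (Gamma_pos_of_pos hc).ne'
  have := (rpow_pos_of_pos hα c).ne'
  field_simp at h ⊢
  linarith

theorem intervalIntegral_exp_neg_mul_sub_mul (α a b : ℝ) (f : ℝ → ℝ) (x : ℝ) :
    ∫ y in a..b, exp (-α * (x - y)) * f y = exp (-α * x) * ∫ y in a..b, exp (α * y) * f y := by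
  rw [← intervalIntegral.integral_const_mul]
  congr 1 with y
  rw [← mul_assoc, ← exp_add]
  ring_nf

theorem shot_noise_stationary_density_gamma_general
    (lam mu α : ℝ) (hlam : 0 < lam) (hmu : 0 < mu) (hα : 0 < α)
    (f : ℝ → ℝ) (hfc : ContinuousOn f (Set.Ioi 0))
    (hnorm : ∫ x in Set.Ioi (0 : ℝ), f x = 1)
    (heq : ∀ x : ℝ, 0 < x →
      x * f x = (lam / mu) * ∫ y in (0 : ℝ)..x, Real.exp (-α * (x - y)) * f y) :
    ∀ x : ℝ, 0 < x →
      f x = α ^ (lam / mu) * x ^ (lam / mu - 1) * Real.exp (-α * x)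
        / Real.Gamma (lam / mu) := by
  set c := lam / mu
  have hc : 0 < c := div_pos hlam hmu
  have hfint : IntegrableOn f (Ioi 0) := Integrable.of_integral_ne_zero (by simp [hnorm])
  set F : ℝ → ℝ := fun x => ∫ y in (0 : ℝ)..x, exp (α * y) * f y
  have hF : ∀ x, 0 < x → HasDerivAt F (exp (α * x) * f x) x := fun x hx =>
    hasDerivAt_integral_of_continuousOn_of_isOpen
      (((intervalIntegrable_iff_integrableOn_Ioc_of_le hx.le).2
        (hfint.mono_set Ioc_subset_Ioi_self)).continuousOn_mul (by fun_prop))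
      ((by fun_prop : Continuous fun y => exp (α * y)).continuousOn.mul hfc) isOpen_Ioi hx
  have hfF : ∀ x, 0 < x → x * f x = c * exp (-α * x) * F x := fun x hx => by
    rw [heq x hx, intervalIntegral_exp_neg_mul_sub_mul, mul_assoc]
  have hFpow : ∀ x, 0 < x → F x = F 1 * x ^ c := by
    refine eq_mul_rpow_of_mul_hasDerivAt_eq hF fun x hx => ?_
    calc x * (exp (α * x) * f x) = exp (α * x) * (x * f x) := by ring
      _ = c * F x * (exp (α * x) * exp (-α * x)) := by rw [hfF x hx]; ring
      _ = c * F x := by rw [← exp_add]; simp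
  have hf : ∀ x, 0 < x → f x = c * F 1 * (x ^ (c - 1) * exp (-α * x)) := by
    intro x hx
    apply mul_left_cancel₀ hx.ne'
    rw [hfF x hx, hFpow x hx, rpow_sub_one hx.ne']
    field_simp
  have hconst : c * F 1 = α ^ c / Gamma c :=
    eq_of_integral_Ioi_const_mul_rpow_mul_exp_eq_one hc hα <|
      (setIntegral_congr_fun measurableSet_Ioi fun x hx => (hf x hx).symm).trans hnorm
  intro x hx
  rw [hf x hx, hconst]
  ring

/-- The unique continuous probability-density solution of the shot-noise stationary
integral equation `x f(x) = (λ/μ) ∫_0^x e^{−α(x−y)} f(y) dy` is the Gamma(λ/μ, α)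
density `f(x) = α^{λ/μ} x^{λ/μ−1} e^{−αx} / Γ(λ/μ)`. -/
theorem shot_noise_stationary_density_gamma
    (lam mu α : ℝ) (hlam : 0 < lam) (hmu : 0 < mu) (hα : 0 < α)
    (f : ℝ → ℝ) (hfc : ContinuousOn f (Set.Ioi 0))
    (hf0 : ∀ x : ℝ, 0 < x → 0 ≤ f x)
    (hnorm : ∫ x in Set.Ioi (0 : ℝ), f x = 1)
    (heq : ∀ x : ℝ, 0 < x →
      x * f x = (lam / mu) * ∫ y in (0 : ℝ)..x, Real.exp (-α * (x - y)) * f y) :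
    ∀ x : ℝ, 0 < x →
      f x = α ^ (lam / mu) * x ^ (lam / mu - 1) * Real.exp (-α * x)
        / Real.Gamma (lam / mu) :=
  shot_noise_stationary_density_gamma_general lam mu α hlam hmu hα f hfc hnorm heq
end

section
/- Let λ, μ, α, c > 0 with λ < αcμ, and let Γ(s, x) := ∫_x^∞ t^{s−1} e^{−t} dt denote the upper incomplete gamma function and Γ(s) = Γ(s, 0). Define D := (αcμ − λ)·Γ(λ/μ) − αcμ·Γ(λ/μ, αc) + μ·Γ(λ/μ + 1, αc), and define f_C : (0, ∞) → ℝ by f_C(x) = α^{λ/μ} (αcμ − λ) e^{−αx} x^{λ/μ − 1} / D for 0 < x ≤ c, and f_C(x) = (α − λ/(cμ)) · (μ·Γ(λ/μ + 1, αc) − λ·Γ(λ/μ, αc)) · e^{−(α − λ/(cμ))(x − c)} / D for x > c. Then f_C is non-negative, ∫_0^∞ f_C(x) dx = 1, and min(x, c) · f_C(x) = (λ/μ) · ∫_0^x e^{−α(x−y)} f_C(y) dy for all x > 0. -/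
open MeasureTheory Filter Real

/-- The upper incomplete gamma function `Γ(s, x) = ∫_x^∞ t^{s−1} e^{−t} dt`
(so `Γ(s) = Γ(s, 0)`). -/
noncomputable def upperGamma (s x : ℝ) : ℝ :=
  ∫ t in Set.Ioi x, t ^ (s - 1) * Real.exp (-t)

/-- The normalizing constant
`D = (αcμ − λ)Γ(λ/μ) − αcμ Γ(λ/μ, αc) + μ Γ(λ/μ + 1, αc)`. -/
noncomputable def thresholdDensityDenom (lam mu α c : ℝ) : ℝ :=
  (α * c * mu - lam) * upperGamma (lam / mu) 0
    - α * c * mu * upperGamma (lam / mu) (α * c)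
    + mu * upperGamma (lam / mu + 1) (α * c)

/-- The closed-form steady-state density of the `c`-threshold storage process with
exponential(α) marks: gamma-shaped below the threshold and exponential above it. -/
noncomputable def thresholdDensity (lam mu α c : ℝ) (x : ℝ) : ℝ :=
  if x ≤ c then
    α ^ (lam / mu) * (α * c * mu - lam) * Real.exp (-α * x) * x ^ (lam / mu - 1)
      / thresholdDensityDenom lam mu α c
  else
    (α - lam / (c * mu))
      * (mu * upperGamma (lam / mu + 1) (α * c) - lam * upperGamma (lam / mu) (α * c))
      * Real.exp (-(α - lam / (c * mu)) * (x - c))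
      / thresholdDensityDenom lam mu α c

/-!
With `r = λ/μ`, the density is `e^{-αx} q(x) / M` for the profile `q(x) = x^{r-1}` (`x ≤ c`),
`q(x) = c^{r-1} e^{r(x-c)/c}` (`x ≥ c`), continuous at `c`. The kernel `e^{-α(x-y)}` factors
out of the integral equation, which becomes `min(x,c) q(x) = r ∫_0^x q`: both sides are `x^r`
below the threshold and `c^r e^{r(x-c)/c}` above it. Stability `r/c < α` makes `e^{-αx} q(x)`
integrable; the substitution `t = αy` and `Γ(r+1, αc) = (αc)^r e^{-αc} + r Γ(r, αc)` show
that its integral `M` equals `D / (α^r (αcμ - λ))`, which is exactly the normalisation in `f_C`.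
-/

open Set Topology

lemma integrableOn_rpow_mul_exp_neg_Ioi (s : ℝ) {x : ℝ} (hx : 0 < x) :
    IntegrableOn (fun t : ℝ => t ^ (s - 1) * exp (-t)) (Ioi x) := by
  simp_rw [mul_comm _ (exp _)]
  refine integrable_of_isBigO_exp_neg one_half_pos ?_ (Gamma_integrand_isLittleO _).isBigO
  exact continuous_exp.comp_continuousOn continuousOn_neg |>.mul
    (continuousOn_id.rpow_const fun t ht => Or.inl (hx.trans_le ht).ne')

lemma upperGamma_zero {s : ℝ} (hs : 0 < s) : upperGamma s 0 = Gamma s := by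
  simp_rw [Gamma_eq_integral hs, upperGamma, mul_comm]

lemma upperGamma_add_one (s : ℝ) {x : ℝ} (hx : 0 < x) :
    upperGamma (s + 1) x = x ^ s * exp (-x) + s * upperGamma s x := by
  have hderiv : ∀ t ∈ Ici x, HasDerivAt (fun u => -(u ^ s * exp (-u)))
      (t ^ (s + 1 - 1) * exp (-t) - s * (t ^ (s - 1) * exp (-t))) t := by
    intro t ht
    have hpow := hasDerivAt_rpow_const (p := s) (Or.inl (hx.trans_le ht).ne')
    refine (hpow.mul (hasDerivAt_neg t).exp).neg.congr_deriv ?_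
    rw [add_sub_cancel_right]
    ring
  have hint₁ := integrableOn_rpow_mul_exp_neg_Ioi (s + 1) hx
  have hint₂ := (integrableOn_rpow_mul_exp_neg_Ioi s hx).const_mul s
  have htend : Tendsto (fun u => -(u ^ s * exp (-u))) atTop (𝓝 0) := by
    simpa using (tendsto_rpow_mul_exp_neg_mul_atTop_nhds_zero s 1 one_pos).neg
  have key := integral_Ioi_of_hasDerivAt_of_tendsto' hderiv (hint₁.sub hint₂) htend
  rw [integral_sub hint₁ hint₂, integral_const_mul] at key
  rw [upperGamma, upperGamma]
  linarith

lemma integral_Ioi_rpow_mul_exp_neg_mul (s : ℝ) {α b : ℝ} (hα : 0 < α) (hb : 0 ≤ b) :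
    ∫ y in Ioi b, y ^ (s - 1) * exp (-α * y) = α ^ (-s) * upperGamma s (α * b) := by
  have hscale : EqOn (fun y => y ^ (s - 1) * exp (-α * y))
      (fun y => (α ^ (-s) * α) * ((α * y) ^ (s - 1) * exp (-(α * y)))) (Ioi b) := by
    intro y hy
    dsimp only
    rw [mul_rpow hα.le (hb.trans hy.le), rpow_sub_one hα.ne', rpow_neg hα.le, neg_mul]
    field_simp
  rw [setIntegral_congr_fun measurableSet_Ioi hscale, integral_const_mul,
    integral_comp_mul_left_Ioi (fun t => t ^ (s - 1) * exp (-t)) b hα, smul_eq_mul, upperGamma]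
  field_simp

lemma integrableOn_rpow_mul_exp_neg_mul {s α : ℝ} (hs : 0 < s) (hα : 0 < α) :
    IntegrableOn (fun y => y ^ (s - 1) * exp (-α * y)) (Ioi 0) := by
  simpa using integrableOn_rpow_mul_exp_neg_mul_rpow (by linarith : -1 < s - 1) one_pos hα

lemma integral_Ioc_rpow_mul_exp_neg_mul {s α c : ℝ} (hs : 0 < s) (hα : 0 < α) (hc : 0 ≤ c) :
    ∫ y in Ioc 0 c, y ^ (s - 1) * exp (-α * y)
      = α ^ (-s) * (Gamma s - upperGamma s (α * c)) := by
  have hint := integrableOn_rpow_mul_exp_neg_mul hs hα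
  have hsplit := setIntegral_union (Ioc_disjoint_Ioi le_rfl) measurableSet_Ioi
    (hint.mono_set Ioc_subset_Ioi_self) (hint.mono_set (Ioi_subset_Ioi hc))
  rw [Ioc_union_Ioi_eq_Ioi hc, integral_Ioi_rpow_mul_exp_neg_mul s hα le_rfl,
    integral_Ioi_rpow_mul_exp_neg_mul s hα hc, mul_zero, upperGamma_zero hs] at hsplit
  linear_combination -hsplit

noncomputable def thresholdProfile (r c x : ℝ) : ℝ :=
  if x ≤ c then x ^ (r - 1) else c ^ (r - 1) * exp (r / c * (x - c))

section thresholdProfile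

variable {r c x : ℝ}

lemma thresholdProfile_of_le (hxc : x ≤ c) : thresholdProfile r c x = x ^ (r - 1) :=
  if_pos hxc

lemma thresholdProfile_of_ge (hcx : c ≤ x) :
    thresholdProfile r c x = c ^ (r - 1) * exp (r / c * (x - c)) := by
  rcases hcx.eq_or_lt with rfl | hlt
  · simp [thresholdProfile]
  · exact if_neg hlt.not_ge

lemma thresholdProfile_nonneg (hc : 0 ≤ c) (hx : 0 ≤ x) : 0 ≤ thresholdProfile r c x := by
  unfold thresholdProfile
  split_ifs <;> positivity

lemma integral_thresholdProfile_of_le (hr : 0 < r) (hx : 0 ≤ x) (hxc : x ≤ c) :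
    ∫ y in 0..x, thresholdProfile r c y = x ^ r / r := by
  rw [intervalIntegral.integral_congr fun y hy => thresholdProfile_of_le ?_,
    integral_rpow (Or.inl (by linarith)), sub_add_cancel, zero_rpow hr.ne', sub_zero]
  rw [uIcc_of_le hx] at hy
  exact hy.2.trans hxc

lemma integral_thresholdProfile_of_ge (hr : 0 < r) (hc : 0 < c) (hcx : c ≤ x) :
    ∫ y in 0..x, thresholdProfile r c y = c ^ r / r * exp (r / c * (x - c)) := by
  have hcont : Continuous fun y => c ^ (r - 1) * exp (r / c * (y - c)) := by fun_prop
  have hderiv : ∀ y ∈ uIcc c x, HasDerivAt (fun y => c ^ r / r * exp (r / c * (y - c)))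
      (c ^ (r - 1) * exp (r / c * (y - c))) y := by
    intro y _
    have := (((hasDerivAt_id' y).sub_const c).const_mul (r / c)).exp.const_mul (c ^ r / r)
    refine this.congr_deriv ?_
    rw [rpow_sub_one hc.ne']
    field_simp
  have hupper : ∫ y in c..x, thresholdProfile r c y
      = c ^ r / r * exp (r / c * (x - c)) - c ^ r / r := by
    rw [intervalIntegral.integral_congr fun y hy => thresholdProfile_of_ge ?_,
      intervalIntegral.integral_eq_sub_of_hasDerivAt hderiv, sub_self, mul_zero, exp_zero, mul_one]
    · exact hcont.intervalIntegrable c x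
    · rw [uIcc_of_le hcx] at hy
      exact hy.1
  have hint₁ : IntervalIntegrable (thresholdProfile r c) volume 0 c :=
    (intervalIntegral.intervalIntegrable_rpow' (by linarith : -1 < r - 1)).congr
      fun y hy => (thresholdProfile_of_le (uIoc_of_le hc.le ▸ hy).2).symm
  have hint₂ : IntervalIntegrable (thresholdProfile r c) volume c x :=
    (hcont.intervalIntegrable c x).congr fun y hy =>
      (thresholdProfile_of_ge (uIoc_of_le hcx ▸ hy).1.le).symm
  rw [← intervalIntegral.integral_add_adjacent_intervals hint₁ hint₂,
    integral_thresholdProfile_of_le hr hc.le le_rfl, hupper]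
  ring

lemma min_mul_thresholdProfile (hr : 0 < r) (hc : 0 < c) (hx : 0 < x) :
    min x c * thresholdProfile r c x = r * ∫ y in 0..x, thresholdProfile r c y := by
  rcases le_total x c with hxc | hcx
  · rw [min_eq_left hxc, thresholdProfile_of_le hxc, integral_thresholdProfile_of_le hr hx.le hxc,
      rpow_sub_one hx.ne']
    field_simp
  · rw [min_eq_right hcx, thresholdProfile_of_ge hcx, integral_thresholdProfile_of_ge hr hc hcx,
      rpow_sub_one hc.ne']
    field_simp

end thresholdProfile

section mass

variable {r c α : ℝ}

lemma integral_exp_neg_mul_thresholdProfile (hr : 0 < r) (hc : 0 < c) (hα : 0 < α)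
    (hrc : r / c < α) :
    ∫ y in Ioi 0, exp (-α * y) * thresholdProfile r c y
      = α ^ (-r) * (Gamma r - upperGamma r (α * c))
        + c ^ (r - 1) * exp (-α * c) / (α - r / c) := by
  have hlow : EqOn (fun y => exp (-α * y) * thresholdProfile r c y)
      (fun y => y ^ (r - 1) * exp (-α * y)) (Ioc 0 c) := fun y hy => by
    simp only [thresholdProfile_of_le hy.2, mul_comm]
  have hhigh : EqOn (fun y => exp (-α * y) * thresholdProfile r c y)
      (fun y => c ^ (r - 1) * exp (-r) * exp ((r / c - α) * y)) (Ioi c) := fun y hy => by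
    simp only [thresholdProfile_of_ge hy.le]
    rw [mul_left_comm, mul_assoc, ← exp_add, ← exp_add]
    field_simp
    ring_nf
  have hβ : r / c - α < 0 := by linarith
  have hint₁ : IntegrableOn (fun y => exp (-α * y) * thresholdProfile r c y) (Ioc 0 c) :=
    ((integrableOn_rpow_mul_exp_neg_mul hr hα).mono_set Ioc_subset_Ioi_self).congr_fun
      hlow.symm measurableSet_Ioc
  have hint₂ : IntegrableOn (fun y => exp (-α * y) * thresholdProfile r c y) (Ioi c) :=
    IntegrableOn.congr_fun ((integrableOn_exp_mul_Ioi hβ c).const_mul _) hhigh.symm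
      measurableSet_Ioi
  have hexp : exp (-r) * exp ((r / c - α) * c) = exp (-α * c) := by
    rw [← exp_add]
    field_simp
    ring_nf
  rw [← Ioc_union_Ioi_eq_Ioi hc.le, setIntegral_union (Ioc_disjoint_Ioi le_rfl) measurableSet_Ioi
      hint₁ hint₂, setIntegral_congr_fun measurableSet_Ioc hlow,
    setIntegral_congr_fun measurableSet_Ioi hhigh, integral_Ioc_rpow_mul_exp_neg_mul hr hα hc.le,
    integral_const_mul, integral_exp_mul_Ioi hβ, ← hexp, neg_div, ← div_neg, neg_sub]
  ring

lemma integral_exp_neg_mul_thresholdProfile_pos (hr : 0 < r) (hc : 0 < c) (hα : 0 < α)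
    (hrc : r / c < α) :
    0 < ∫ y in Ioi 0, exp (-α * y) * thresholdProfile r c y := by
  rw [integral_exp_neg_mul_thresholdProfile hr hc hα hrc,
    ← integral_Ioc_rpow_mul_exp_neg_mul hr hα hc.le]
  have hβ : 0 < α - r / c := sub_pos.2 hrc
  exact add_pos_of_nonneg_of_pos
    (setIntegral_nonneg measurableSet_Ioc fun y hy => by have := hy.1; positivity) (by positivity)

end mass

section density

variable {lam mu α c : ℝ}

lemma div_div_lt_of_lt_mul_mul (hmu : 0 < mu) (hc : 0 < c) (hstab : lam < α * c * mu) :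
    lam / mu / c < α := by
  rw [div_div, div_lt_iff₀ (by positivity)]
  linarith

lemma thresholdDensityDenom_eq_mul_integral (hlam : 0 < lam) (hmu : 0 < mu) (hα : 0 < α)
    (hc : 0 < c) (hstab : lam < α * c * mu) :
    thresholdDensityDenom lam mu α c
      = α ^ (lam / mu) * (α * c * mu - lam)
        * ∫ y in Ioi 0, exp (-α * y) * thresholdProfile (lam / mu) c y := by
  have hK : α * c * mu - lam ≠ 0 := (sub_pos.2 hstab).ne'
  rw [integral_exp_neg_mul_thresholdProfile (by positivity) hc hα
      (div_div_lt_of_lt_mul_mul hmu hc hstab), thresholdDensityDenom,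
    upperGamma_zero (by positivity), upperGamma_add_one _ (by positivity), mul_rpow hα.le hc.le,
    rpow_neg hα.le, rpow_sub_one hc.ne']
  field_simp
  ring

lemma thresholdDensity_eq_div_integral (hlam : 0 < lam) (hmu : 0 < mu) (hα : 0 < α)
    (hc : 0 < c) (hstab : lam < α * c * mu) (x : ℝ) :
    thresholdDensity lam mu α c x
      = exp (-α * x) * thresholdProfile (lam / mu) c x
        / ∫ y in Ioi 0, exp (-α * y) * thresholdProfile (lam / mu) c y := by
  have hK : α * c * mu - lam ≠ 0 := (sub_pos.2 hstab).ne'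
  have hA : α ^ (lam / mu) * (α * c * mu - lam) ≠ 0 := mul_ne_zero (by positivity) hK
  rw [thresholdDensity, thresholdDensityDenom_eq_mul_integral hlam hmu hα hc hstab]
  split_ifs with hxc
  · rw [thresholdProfile_of_le hxc, mul_assoc _ (exp _), mul_div_mul_left _ _ hA]
  · have hexp : exp (-α * x) * exp (lam / mu / c * (x - c))
        = exp (-(α * c)) * exp (-(α - lam / (c * mu)) * (x - c)) := by
      rw [← exp_add, ← exp_add]
      field_simp
      ring_nf
    rw [thresholdProfile_of_ge (le_of_not_ge hxc), mul_left_comm, hexp,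
      upperGamma_add_one _ (by positivity), mul_rpow hα.le hc.le, rpow_sub_one hc.ne']
    field_simp
    ring

end density

/-- Under the stability condition `λ < αcμ`, the function `thresholdDensity` is a
probability density on `(0,∞)` and satisfies the Brockwell stationary integral equation
`min(x,c) f_C(x) = (λ/μ) ∫_0^x e^{−α(x−y)} f_C(y) dy` of the `c`-threshold storage process
with Poisson(λ) arrivals, release rate `μ·min(·,c)` and exponential(α) marks. -/
theorem threshold_storage_density_closed_form
    (lam mu α c : ℝ) (hlam : 0 < lam) (hmu : 0 < mu) (hα : 0 < α) (hc : 0 < c)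
    (hstab : lam < α * c * mu) :
    (∀ x : ℝ, 0 < x → 0 ≤ thresholdDensity lam mu α c x)
    ∧ (∫ x in Set.Ioi (0 : ℝ), thresholdDensity lam mu α c x) = 1
    ∧ (∀ x : ℝ, 0 < x →
        min x c * thresholdDensity lam mu α c x
          = (lam / mu)
            * ∫ y in (0 : ℝ)..x, Real.exp (-α * (x - y)) * thresholdDensity lam mu α c y) := by
  have hmass := integral_exp_neg_mul_thresholdProfile_pos (by positivity) hc hα
    (div_div_lt_of_lt_mul_mul hmu hc hstab)
  simp_rw [thresholdDensity_eq_div_integral hlam hmu hα hc hstab]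
  refine ⟨fun x hx => ?_, ?_, fun x hx => ?_⟩
  · have := thresholdProfile_nonneg (r := lam / mu) hc.le hx.le
    positivity
  · rw [integral_div, div_self hmass.ne']
  · have hkernel : ∀ y, exp (-α * (x - y)) * (exp (-α * y) * thresholdProfile (lam / mu) c y)
        = exp (-α * x) * thresholdProfile (lam / mu) c y := fun y => by
      rw [← mul_assoc, ← exp_add]
      ring_nf
    simp_rw [mul_div_assoc', hkernel, intervalIntegral.integral_div,
      intervalIntegral.integral_const_mul]
    rw [mul_left_comm (min x c), min_mul_thresholdProfile (by positivity) hc hx]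
    ring
end

section
/- Let λ, μ, c > 0 with λ·E[M] < cμ. Let X be a non-negative random variable with probability density f and E[X] < ∞, and let M be a non-negative integrable random variable independent of X. Suppose that min(x, c) · f(x) = (λ/μ) · ∫_0^x P(M > x − y) f(y) dy for Lebesgue-almost every x > 0, and that P(X ≤ c) > 0. Then P(X > c) ≤ ((λ/μ)·E[M] − (λ/(λ + μ))·E[min(M, c)]) / (c − (λ/(λ + μ))·E[min(M, c)]). -/
/-!
Integrating the stationarity equation over all `x > 0` and exchanging the order of integration
(Tonelli on the triangle `0 < y < x`) gives the balance
`∫_{(0,c]} x f(x) dx + c P(X > c) ≤ (λ/μ) E[M]`, because `∫_{x > y} P(M > x - y) dx = E[M]`.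
Integrating it only over `(0, c]` and using `∫_{(y,c]} P(M > x - y) dx ≥ E[min(M, c)] - y`
gives `(λ/μ) E[min(M, c)] P(X ≤ c) ≤ (1 + λ/μ) ∫_{(0,c]} x f(x) dx`.
Eliminating `∫_{(0,c]} x f(x) dx` between the two inequalities yields the bound.
-/

open MeasureTheory ProbabilityTheory Set
open scoped ENNReal

theorem lintegral_lintegral_Ioo_sub_mul_swap (s : Set ℝ) {H F : ℝ → ℝ≥0∞}
    (hH : Measurable H) (hF : Measurable F) :
    ∫⁻ x in s, ∫⁻ y in Ioo 0 x, H (x - y) * F y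
      = ∫⁻ y in Ioi 0, (∫⁻ x in s ∩ Ioi y, H (x - y)) * F y := by
  set K : ℝ → ℝ → ℝ≥0∞ := fun x y => if y < x then H (x - y) * F y else 0
  have hK : Measurable (Function.uncurry K) :=
    Measurable.ite (measurableSet_lt measurable_snd measurable_fst)
      ((hH.comp (measurable_fst.sub measurable_snd)).mul (hF.comp measurable_snd))
      measurable_const
  have h_inner (x : ℝ) : ∫⁻ y in Ioo 0 x, H (x - y) * F y = ∫⁻ y in Ioi 0, K x y := by
    have : K x = (Iio x).indicator fun y => H (x - y) * F y := by
      ext y; simp [K, indicator_apply]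
    rw [this, setLIntegral_indicator measurableSet_Iio, Iio_inter_Ioi]
  have h_outer (y : ℝ) : ∫⁻ x in s, K x y = (∫⁻ x in s ∩ Ioi y, H (x - y)) * F y := by
    have : (K · y) = (Ioi y).indicator fun x => H (x - y) * F y := by
      ext x; simp [K, indicator_apply]
    rw [this, setLIntegral_indicator measurableSet_Ioi, inter_comm]
    exact lintegral_mul_const _ (hH.comp (measurable_id.sub_const y))
  simp_rw [h_inner, ← h_outer]
  exact lintegral_lintegral_swap hK.aemeasurable

theorem setLIntegral_comp_sub_right (H : ℝ → ℝ≥0∞) (y : ℝ) (s : Set ℝ) :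
    ∫⁻ x in s, H (x - y) = ∫⁻ t in (· + y) ⁻¹' s, H t := by
  simpa using ((measurePreserving_add_right volume y).setLIntegral_comp_preimage_emb
    (measurableEmbedding_addRight y) (fun x => H (x - y)) s).symm

theorem setLIntegral_Ioc_le_setLIntegral_Ioc_comp_sub_add {G : ℝ → ℝ≥0∞} (hG : ∀ t, G t ≤ 1)
    {y c : ℝ} (hy : 0 ≤ y) (hyc : y ≤ c) :
    ∫⁻ t in Ioc 0 c, G t ≤ (∫⁻ x in Ioc y c, G (x - y)) + ENNReal.ofReal y := by
  rw [setLIntegral_comp_sub_right G y (Ioc y c), preimage_add_const_Ioc, sub_self,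
    ← Ioc_union_Ioc_eq_Ioc (sub_nonneg.2 hyc) (sub_le_self c hy),
    lintegral_union measurableSet_Ioc (Ioc_disjoint_Ioc_of_le le_rfl)]
  gcongr
  calc ∫⁻ t in Ioc (c - y) c, G t ≤ ∫⁻ _ in Ioc (c - y) c, 1 := lintegral_mono hG
    _ = ENNReal.ofReal y := by rw [setLIntegral_one, Real.volume_Ioc, sub_sub_cancel]

theorem setLIntegral_Ioi_min_mul {c : ℝ} (hc : 0 ≤ c) (F : ℝ → ℝ≥0∞) :
    ∫⁻ x in Ioi 0, ENNReal.ofReal (min x c) * F x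
      = (∫⁻ x in Ioc 0 c, ENNReal.ofReal x * F x) + ENNReal.ofReal c * ∫⁻ x in Ioi c, F x := by
  rw [← Ioc_union_Ioi_eq_Ioi hc, lintegral_union measurableSet_Ioi (Ioc_disjoint_Ioi le_rfl),
    ← lintegral_const_mul' _ _ ENNReal.ofReal_ne_top]
  congr 1
  · exact setLIntegral_congr_fun measurableSet_Ioc fun x hx => by rw [min_eq_left hx.2]
  · exact setLIntegral_congr_fun measurableSet_Ioi fun x hx => by rw [min_eq_right hx.le]

/-- The stationarity equation of the storage process for a density `F`, the tail
`G t = P(M > t)` of the jumps and `r = λ/μ`, written in `ℝ≥0∞`. -/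
def SolvesStorageEquation (F G : ℝ → ℝ≥0∞) (r c : ℝ) : Prop :=
  ∀ᵐ x ∂volume.restrict (Ioi 0),
    ENNReal.ofReal (min x c) * F x = ENNReal.ofReal r * ∫⁻ y in Ioo 0 x, G (x - y) * F y

namespace SolvesStorageEquation

variable {F G : ℝ → ℝ≥0∞} {r c : ℝ}

theorem setLIntegral_min_mul (h : SolvesStorageEquation F G r c) (hF : Measurable F)
    (hG : Measurable G) {s : Set ℝ} (hs : s ⊆ Ioi 0) :
    ∫⁻ x in s, ENNReal.ofReal (min x c) * F x
      = ENNReal.ofReal r * ∫⁻ y in Ioi 0, (∫⁻ x in s ∩ Ioi y, G (x - y)) * F y := by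
  rw [← lintegral_lintegral_Ioo_sub_mul_swap s hG hF,
    ← lintegral_const_mul' _ _ ENNReal.ofReal_ne_top]
  exact lintegral_congr_ae (ae_restrict_of_ae_restrict_of_subset hs h)

theorem lintegral_min_mul (h : SolvesStorageEquation F G r c) (hF : Measurable F)
    (hG : Measurable G) :
    ∫⁻ x in Ioi 0, ENNReal.ofReal (min x c) * F x
      = ENNReal.ofReal r * (∫⁻ t in Ioi 0, G t) * ∫⁻ y in Ioi 0, F y := by
  rw [h.setLIntegral_min_mul hF hG subset_rfl, mul_assoc, ← lintegral_const_mul _ hF]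
  refine congrArg _ (setLIntegral_congr_fun measurableSet_Ioi fun y (hy : 0 < y) => ?_)
  rw [Ioi_inter_Ioi, max_eq_right hy.le, setLIntegral_comp_sub_right G y, preimage_add_const_Ioi,
    sub_self]

theorem mul_lintegral_Ioc_le (h : SolvesStorageEquation F G r c) (hF : Measurable F)
    (hG : Measurable G) (hG1 : ∀ t, G t ≤ 1) :
    ENNReal.ofReal r * (∫⁻ t in Ioc 0 c, G t) * ∫⁻ y in Ioc 0 c, F y
      ≤ (1 + ENNReal.ofReal r) * ∫⁻ x in Ioc 0 c, ENNReal.ofReal x * F x := by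
  set L := ∫⁻ x in Ioc 0 c, ENNReal.ofReal x * F x
  set I := ∫⁻ y in Ioi 0, (∫⁻ x in Ioc 0 c ∩ Ioi y, G (x - y)) * F y
  have hL : L = ENNReal.ofReal r * I := by
    rw [← h.setLIntegral_min_mul hF hG Ioc_subset_Ioi_self]
    exact setLIntegral_congr_fun measurableSet_Ioc fun x hx => by rw [min_eq_left hx.2]
  have hI : ∫⁻ y in Ioc 0 c, (∫⁻ t in Ioc 0 c, G t) * F y ≤ I + L :=
    calc ∫⁻ y in Ioc 0 c, (∫⁻ t in Ioc 0 c, G t) * F y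
        ≤ ∫⁻ y in Ioc 0 c,
            ((∫⁻ x in Ioc 0 c ∩ Ioi y, G (x - y)) * F y + ENNReal.ofReal y * F y) := by
          refine setLIntegral_mono' measurableSet_Ioc fun y hy => ?_
          rw [← add_mul, Ioc_inter_Ioi, max_eq_right hy.1.le]
          gcongr
          exact setLIntegral_Ioc_le_setLIntegral_Ioc_comp_sub_add hG1 hy.1.le hy.2
      _ = (∫⁻ y in Ioc 0 c, (∫⁻ x in Ioc 0 c ∩ Ioi y, G (x - y)) * F y) + L :=
          lintegral_add_right _ (by fun_prop)
      _ ≤ I + L := by gcongr; exact lintegral_mono_set Ioc_subset_Ioi_self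
  calc ENNReal.ofReal r * (∫⁻ t in Ioc 0 c, G t) * ∫⁻ y in Ioc 0 c, F y
      = ENNReal.ofReal r * ∫⁻ y in Ioc 0 c, (∫⁻ t in Ioc 0 c, G t) * F y := by
        rw [mul_assoc, lintegral_const_mul _ hF]
    _ ≤ ENNReal.ofReal r * (I + L) := by gcongr
    _ = (1 + ENNReal.ofReal r) * L := by rw [mul_add, ← hL]; ring

end SolvesStorageEquation

theorem ofReal_intervalIntegral_toReal_mul {g : ℝ → ℝ≥0∞} {f : ℝ → ℝ} {x : ℝ} (hx : 0 ≤ x)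
    (hg : Measurable g) (hg1 : ∀ y, g y ≤ 1) (hf : IntegrableOn f (Ioc 0 x))
    (hf0 : ∀ y, 0 ≤ f y) :
    ENNReal.ofReal (∫ y in 0..x, (g y).toReal * f y)
      = ∫⁻ y in Ioo 0 x, g y * ENNReal.ofReal (f y) := by
  have hint : IntegrableOn (fun y => (g y).toReal * f y) (Ioc 0 x) :=
    hf.bdd_mul hg.ennreal_toReal.aestronglyMeasurable (c := 1) (ae_of_all _ fun y => by
      simpa using ENNReal.toReal_mono ENNReal.one_ne_top (hg1 y))
  rw [intervalIntegral.integral_of_le hx, ofReal_integral_eq_lintegral_ofReal hint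
    (ae_of_all _ fun y => mul_nonneg ENNReal.toReal_nonneg (hf0 y)),
    Measure.restrict_congr_set Ioo_ae_eq_Ioc]
  refine lintegral_congr fun y => ?_
  rw [ENNReal.ofReal_mul ENNReal.toReal_nonneg,
    ENNReal.ofReal_toReal (ne_top_of_le_ne_top ENNReal.one_ne_top (hg1 y))]

theorem solvesStorageEquation_ofReal {f : ℝ → ℝ} {G : ℝ → ℝ≥0∞} {r c : ℝ} (hr : 0 ≤ r)
    (hc : 0 ≤ c) (hf : Integrable f) (hf0 : ∀ y, 0 ≤ f y) (hG : Measurable G)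
    (hG1 : ∀ t, G t ≤ 1)
    (heq : ∀ᵐ x ∂volume.restrict (Ioi 0),
      min x c * f x = r * ∫ y in (0 : ℝ)..x, (G (x - y)).toReal * f y) :
    SolvesStorageEquation (fun y => ENNReal.ofReal (f y)) G r c := by
  filter_upwards [heq, ae_restrict_mem measurableSet_Ioi] with x hx (hx0 : 0 < x)
  rw [← ENNReal.ofReal_mul (le_min hx0.le hc), hx, ENNReal.ofReal_mul hr,
    ofReal_intervalIntegral_toReal_mul (g := fun y => G (x - y)) hx0.le (by fun_prop)
      (fun y => hG1 _) hf.integrableOn hf0]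

section Law

variable {Ω : Type*} [MeasurableSpace Ω] {P : Measure Ω}

theorem lintegral_Ioi_meas_lt_eq_ofReal_integral {M : Ω → ℝ} (hM0 : 0 ≤ᵐ[P] M)
    (hM : Integrable M P) :
    ∫⁻ t in Ioi 0, P {ω | t < M ω} = ENNReal.ofReal (∫ ω, M ω ∂P) := by
  rw [← lintegral_eq_lintegral_meas_lt P hM0 hM.aemeasurable,
    ofReal_integral_eq_lintegral_ofReal hM hM0]

theorem lintegral_Ioc_meas_lt_eq_ofReal_integral_min {M : Ω → ℝ} (hM0 : 0 ≤ᵐ[P] M)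
    (hM : Integrable M P) {c : ℝ} (hc : 0 ≤ c) :
    ∫⁻ t in Ioc 0 c, P {ω | t < M ω} = ENNReal.ofReal (∫ ω, min (M ω) c ∂P) := by
  have hmin : Integrable (fun ω => min (M ω) c) P :=
    hM.mono (hM.aestronglyMeasurable.inf aestronglyMeasurable_const) (hM0.mono fun ω h => by
      simp only [Real.norm_eq_abs, abs_of_nonneg h, abs_of_nonneg (le_min h hc), min_le_left])
  rw [← lintegral_Ioi_meas_lt_eq_ofReal_integral (hM0.mono fun ω h => le_min h hc) hmin,
    ← Measure.restrict_congr_set Ioo_ae_eq_Ioc, ← Iio_inter_Ioi,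
    ← setLIntegral_indicator measurableSet_Iio]
  congr 1 with t
  by_cases ht : t < c <;> simp [ht]

variable {X : Ω → ℝ} {F : ℝ → ℝ≥0∞}

theorem measure_preimage_eq_setLIntegral_of_map_eq_withDensity (hX : Measurable X)
    (hdens : P.map X = volume.withDensity F) {s : Set ℝ} (hs : MeasurableSet s) :
    P (X ⁻¹' s) = ∫⁻ y in s, F y := by
  rw [← Measure.map_apply hX hs, hdens, withDensity_apply _ hs]

theorem measure_le_eq_setLIntegral_Ioc_of_map_eq_withDensity (hX : Measurable X)
    (hdens : P.map X = volume.withDensity F) (hX0 : ∀ ω, 0 ≤ X ω) (c : ℝ) :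
    P {ω | X ω ≤ c} = ∫⁻ y in Ioc 0 c, F y := by
  have : {ω | X ω ≤ c} = X ⁻¹' Icc 0 c := by ext ω; simp [hX0 ω]
  rw [this, measure_preimage_eq_setLIntegral_of_map_eq_withDensity hX hdens measurableSet_Icc,
    Measure.restrict_congr_set Ioc_ae_eq_Icc]

theorem integrable_of_map_eq_withDensity [IsFiniteMeasure P] {f : ℝ → ℝ} (hX : Measurable X)
    (hf : Measurable f) (hf0 : ∀ y, 0 ≤ f y)
    (hdens : P.map X = volume.withDensity fun y => ENNReal.ofReal (f y)) :
    Integrable f := by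
  refine ⟨hf.aestronglyMeasurable, ?_⟩
  rw [hasFiniteIntegral_iff_ofReal (ae_of_all _ hf0), ← setLIntegral_univ,
    ← measure_preimage_eq_setLIntegral_of_map_eq_withDensity hX hdens MeasurableSet.univ]
  exact measure_lt_top P _

end Law

theorem le_div_of_storage_balance {lam mu c m mc a p : ℝ} (hlam : 0 < lam) (hmu : 0 < mu)
    (hc : 0 < c) (hmc : mc ≤ c) (h_total : a + c * p ≤ lam / mu * m)
    (h_low : lam / mu * mc * (1 - p) ≤ (1 + lam / mu) * a) :
    p ≤ (lam / mu * m - lam / (lam + mu) * mc) / (c - lam / (lam + mu) * mc) := by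
  have hsum : 0 < lam + mu := add_pos hlam hmu
  have h_low' : lam / (lam + mu) * mc * (1 - p) ≤ a :=
    calc lam / (lam + mu) * mc * (1 - p) = mu / (lam + mu) * (lam / mu * mc * (1 - p)) := by
          field_simp
      _ ≤ mu / (lam + mu) * ((1 + lam / mu) * a) := by gcongr
      _ = a := by field_simp; ring
  have hden : 0 < c - lam / (lam + mu) * mc := by
    rw [show c - lam / (lam + mu) * mc = (mu * c + lam * (c - mc)) / (lam + mu) by
      field_simp; ring]
    exact div_pos (by nlinarith) hsum
  rw [le_div_iff₀ hden]
  nlinarith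

theorem toReal_le_div_of_storage_balance {lam mu c m mc : ℝ} {L p : ℝ≥0∞} (hlam : 0 < lam)
    (hmu : 0 < mu) (hc : 0 < c) (hm : 0 ≤ m) (hmc0 : 0 ≤ mc) (hmc : mc ≤ c) (hp : p ≤ 1)
    (h_total : L + ENNReal.ofReal c * p ≤ ENNReal.ofReal (lam / mu) * ENNReal.ofReal m)
    (h_low : ENNReal.ofReal (lam / mu) * ENNReal.ofReal mc * (1 - p)
      ≤ (1 + ENNReal.ofReal (lam / mu)) * L) :
    p.toReal ≤ (lam / mu * m - lam / (lam + mu) * mc) / (c - lam / (lam + mu) * mc) := by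
  have hr : 0 ≤ lam / mu := (div_pos hlam hmu).le
  have hL : L ≠ ⊤ := ne_top_of_le_ne_top (by finiteness) (le_self_add.trans h_total)
  have hp_top : p ≠ ⊤ := ne_top_of_le_ne_top ENNReal.one_ne_top hp
  refine le_div_of_storage_balance hlam hmu hc hmc (a := L.toReal) ?_ ?_
  · have := ENNReal.toReal_mono (by finiteness) h_total
    rwa [ENNReal.toReal_add hL (by finiteness), ENNReal.toReal_mul, ENNReal.toReal_mul,
      ENNReal.toReal_ofReal hc.le, ENNReal.toReal_ofReal hr, ENNReal.toReal_ofReal hm] at this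
  · have := ENNReal.toReal_mono (by finiteness) h_low
    rwa [ENNReal.toReal_mul, ENNReal.toReal_mul, ENNReal.toReal_mul,
      ENNReal.toReal_add ENNReal.one_ne_top ENNReal.ofReal_ne_top,
      ENNReal.toReal_sub_of_le hp ENNReal.one_ne_top, ENNReal.toReal_one,
      ENNReal.toReal_ofReal hr, ENNReal.toReal_ofReal hmc0] at this

theorem threshold_storage_exceedance_upper_bound_general
    {Ω : Type*} [MeasurableSpace Ω] (P : Measure Ω) [IsProbabilityMeasure P]
    (lam mu c : ℝ) (hlam : 0 < lam) (hmu : 0 < mu) (hc : 0 < c)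
    (X M : Ω → ℝ) (hX : Measurable X)
    (hX0 : ∀ ω, 0 ≤ X ω) (hM0 : ∀ ω, 0 ≤ M ω)
    (hMint : Integrable M P)
    (f : ℝ → ℝ) (hf : Measurable f) (hf0 : ∀ y, 0 ≤ f y)
    (hdens : Measure.map X P = volume.withDensity (fun y => ENNReal.ofReal (f y)))
    (heq : ∀ᵐ x ∂(volume.restrict (Set.Ioi (0 : ℝ))),
      min x c * f x
        = (lam / mu) * ∫ y in (0 : ℝ)..x, (P {ω | x - y < M ω}).toReal * f y) :
    (P {ω | c < X ω}).toReal
      ≤ ((lam / mu) * (∫ ω, M ω ∂P)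
            - (lam / (lam + mu)) * ∫ ω, min (M ω) c ∂P)
        / (c - (lam / (lam + mu)) * ∫ ω, min (M ω) c ∂P) := by
  set G : ℝ → ℝ≥0∞ := fun t => P {ω | t < M ω}
  have hG : Measurable G :=
    Antitone.measurable fun s t hst => measure_mono fun ω hω => hst.trans_lt hω
  have hG1 : ∀ t, G t ≤ 1 := fun t => prob_le_one
  have hF : Measurable fun y => ENNReal.ofReal (f y) := hf.ennreal_ofReal
  have hstat : SolvesStorageEquation (fun y => ENNReal.ofReal (f y)) G (lam / mu) c :=
    solvesStorageEquation_ofReal (div_pos hlam hmu).le hc.le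
      (integrable_of_map_eq_withDensity hX hf hf0 hdens) hf0 hG hG1 heq
  have h_total := hstat.lintegral_min_mul hF hG
  rw [setLIntegral_Ioi_min_mul hc.le,
    ← measure_preimage_eq_setLIntegral_of_map_eq_withDensity hX hdens measurableSet_Ioi,
    ← measure_preimage_eq_setLIntegral_of_map_eq_withDensity hX hdens measurableSet_Ioi,
    lintegral_Ioi_meas_lt_eq_ofReal_integral (ae_of_all _ hM0) hMint] at h_total
  have h_low := hstat.mul_lintegral_Ioc_le hF hG hG1
  have h_compl : {ω | X ω ≤ c} = (X ⁻¹' Ioi c)ᶜ := by ext; simp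
  rw [lintegral_Ioc_meas_lt_eq_ofReal_integral_min (ae_of_all _ hM0) hMint hc.le,
    ← measure_le_eq_setLIntegral_Ioc_of_map_eq_withDensity hX hdens hX0, h_compl,
    prob_compl_eq_one_sub (hX measurableSet_Ioi)] at h_low
  have h_min_le : ∫ ω, min (M ω) c ∂P ≤ c :=
    (integral_mono_of_nonneg (ae_of_all _ fun ω => le_min (hM0 ω) hc.le) (integrable_const c)
      (ae_of_all _ fun ω => min_le_right _ _)).trans_eq (by simp)
  exact toReal_le_div_of_storage_balance hlam hmu hc (integral_nonneg hM0)
    (integral_nonneg fun ω => le_min (hM0 ω) hc.le) h_min_le prob_le_one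
    (h_total.le.trans (mul_le_of_le_one_right' prob_le_one)) h_low

/-- Closed-form upper bound on the exceedance probability of the stationary `c`-threshold
storage process: under the stability condition `λE[M] < cμ`,
`P(X > c) ≤ ((λ/μ)E[M] − (λ/(λ+μ))E[min(M,c)]) / (c − (λ/(λ+μ))E[min(M,c)])`. -/
theorem threshold_storage_exceedance_upper_bound
    {Ω : Type*} [MeasurableSpace Ω] (P : Measure Ω) [IsProbabilityMeasure P]
    (lam mu c : ℝ) (hlam : 0 < lam) (hmu : 0 < mu) (hc : 0 < c)
    (X M : Ω → ℝ) (hX : Measurable X) (hM : Measurable M)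
    (hX0 : ∀ ω, 0 ≤ X ω) (hM0 : ∀ ω, 0 ≤ M ω)
    (hXint : Integrable X P) (hMint : Integrable M P)
    (hindep : IndepFun X M P)
    (hstab : lam * (∫ ω, M ω ∂P) < c * mu)
    (f : ℝ → ℝ) (hf : Measurable f) (hf0 : ∀ y, 0 ≤ f y)
    (hdens : Measure.map X P = volume.withDensity (fun y => ENNReal.ofReal (f y)))
    (heq : ∀ᵐ x ∂(volume.restrict (Set.Ioi (0 : ℝ))),
      min x c * f x
        = (lam / mu) * ∫ y in (0 : ℝ)..x, (P {ω | x - y < M ω}).toReal * f y)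
    (hpos : 0 < (P {ω | X ω ≤ c}).toReal) :
    (P {ω | c < X ω}).toReal
      ≤ ((lam / mu) * (∫ ω, M ω ∂P)
            - (lam / (lam + mu)) * ∫ ω, min (M ω) c ∂P)
        / (c - (lam / (lam + mu)) * ∫ ω, min (M ω) c ∂P) :=
  threshold_storage_exceedance_upper_bound_general P lam mu c hlam hmu hc X M hX hX0 hM0 hMint f hf
    hf0 hdens heq
end

section
/- Fix p ∈ [0, 1] and θ ≤ 0. For each n ∈ ℤ⁺, let B(n) be an ℕ-valued random variable, and let M be a non-negative, almost surely finite random variable such that B(n)/n converges in distribution to M as n → ∞. Then E[(1 + p(e^{θ/n} − 1))^{B(n)}] → E[e^{θ p M}] as n → ∞. -/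
/-!
If `θp = 0` every base is `1`. Otherwise write `b_n = 1 + p(e^{θ/n} − 1)`; since `b_n → 1`,
eventually `b_n ^ k = exp (a_n · k/n)` with `a_n = n log b_n`.
The derivative of `t ↦ log (1 + p(e^{θt} − 1))` at `0` is `θp`, hence `a_n → θp`. For
`a, c ≤ m < 0` the functions `x ↦ e^{a x}` and `x ↦ e^{c x}` differ on `[0, ∞)` by at most
`|a − c| / (−m)`, so `E[b_n ^ {B(n)}]` and `E[e^{θp B(n)/n}]` have the same limit, and the latter
tends to `E[e^{θpM}]` because `x ↦ e^{θp x}` agrees on `[0, ∞)` with a bounded continuous function.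
-/

open MeasureTheory Filter Real Topology

namespace Real

theorem abs_exp_sub_exp_le_abs_sub_mul_exp_max (u v : ℝ) :
    |exp u - exp v| ≤ |u - v| * exp (max u v) := by
  wlog h : u ≤ v generalizing u v
  · rw [abs_sub_comm, abs_sub_comm u, max_comm]
    exact this v u (le_of_not_ge h)
  have htangent : exp v * (1 + (u - v)) ≤ exp u := by
    calc exp v * (1 + (u - v)) ≤ exp v * exp (u - v) := by
          gcongr; linarith [add_one_le_exp (u - v)]
      _ = exp u := by rw [← exp_add]; ring_nf
  rw [max_eq_right h, abs_of_nonpos (by simpa using exp_le_exp.mpr h),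
    abs_of_nonpos (by linarith)]
  linarith

theorem mul_exp_mul_le_inv_neg {t m : ℝ} (hm : m < 0) :
    t * exp (t * m) ≤ (-m)⁻¹ := by
  rw [← one_div, le_div_iff₀ (neg_pos.mpr hm)]
  have hpos := exp_pos (t * m)
  have h := mul_le_mul_of_nonneg_right (add_one_le_exp (-(t * m))) hpos.le
  rw [exp_neg, inv_mul_cancel₀ hpos.ne'] at h
  nlinarith

/-- Uniform in `t ≥ 0`: the factor `t` in `|a t - c t|` is absorbed by the decay of `exp (t * m)`. -/
theorem abs_exp_mul_sub_exp_mul_le {t a c m : ℝ} (ht : 0 ≤ t) (ha : a ≤ m) (hc : c ≤ m)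
    (hm : m < 0) : |exp (a * t) - exp (c * t)| ≤ |a - c| * (-m)⁻¹ :=
  calc |exp (a * t) - exp (c * t)| ≤ |a * t - c * t| * exp (max (a * t) (c * t)) :=
        abs_exp_sub_exp_le_abs_sub_mul_exp_max _ _
    _ ≤ |a - c| * (t * exp (t * m)) := by
        rw [← sub_mul, abs_mul, abs_of_nonneg ht, mul_assoc]
        gcongr
        rw [mul_comm t m]
        exact max_le (mul_le_mul_of_nonneg_right ha ht) (mul_le_mul_of_nonneg_right hc ht)
    _ ≤ |a - c| * (-m)⁻¹ := by gcongr; exact mul_exp_mul_le_inv_neg hm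

theorem pow_eq_exp_div_mul_mul_log {b : ℝ} (hb : 0 < b) (k : ℕ) {n : ℝ} (hn : n ≠ 0) :
    b ^ k = exp (n * log b * (k / n)) := by
  rw [show n * log b * (k / n) = k * log b by field_simp, exp_nat_mul, exp_log hb]

end Real

theorem HasDerivAt.tendsto_natCast_mul_comp_inv {g : ℝ → ℝ} {d : ℝ} (hg : HasDerivAt g d 0)
    (hg0 : g 0 = 0) : Tendsto (fun n : ℕ => n * g (n : ℝ)⁻¹) atTop (𝓝 d) := by
  have hinv : Tendsto (fun n : ℕ => (n : ℝ)⁻¹) atTop (𝓝[≠] 0) :=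
    (tendsto_inv_atTop_nhdsGT_zero.comp tendsto_natCast_atTop_atTop).mono_right
      (nhdsWithin_mono _ fun _ hx => ne_of_gt hx)
  simpa [Function.comp_def, hg0] using hg.tendsto_slope_zero.comp hinv

theorem tendsto_natCast_mul_log_one_add_mul_exp_div_sub_one (p θ : ℝ) :
    Tendsto (fun n : ℕ => n * log (1 + p * (exp (θ / n) - 1))) atTop (𝓝 (θ * p)) := by
  have hg : HasDerivAt (fun t => log (1 + p * (exp (θ * t) - 1))) (θ * p) 0 := by
    have h := (((((hasDerivAt_id (0 : ℝ)).const_mul θ).exp).sub_const 1).const_mul p).const_add 1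
      |>.log (by simp)
    simpa [mul_comm θ p] using h
  simpa [div_eq_mul_inv] using hg.tendsto_natCast_mul_comp_inv (by simp)

theorem eventually_pos_one_add_mul_exp_div_sub_one (p θ : ℝ) :
    ∀ᶠ n : ℕ in atTop, 0 < 1 + p * (exp (θ / n) - 1) := by
  have h : Tendsto (fun n : ℕ => 1 + p * (exp (θ / n) - 1)) atTop (𝓝 (1 + p * (exp 0 - 1))) :=
    (((continuous_exp.tendsto 0).comp (tendsto_const_div_atTop_nhds_zero_nat θ)).sub_const 1
      |>.const_mul p).const_add 1
  exact h.eventually (lt_mem_nhds (by simp))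

section Integral

variable {Ω : Type*} [MeasurableSpace Ω] {P : Measure Ω}

theorem tendsto_integral_of_norm_sub_le {ι E : Type*} [NormedAddCommGroup E] [NormedSpace ℝ E]
    [IsFiniteMeasure P] {l : Filter ι} {Y Z : ι → Ω → E} {ε : ι → ℝ} {L : E}
    (hY : ∀ᶠ i in l, Integrable (Y i) P) (hZ : ∀ᶠ i in l, Integrable (Z i) P)
    (hYZ : ∀ᶠ i in l, ∀ᵐ ω ∂P, ‖Y i ω - Z i ω‖ ≤ ε i) (hε : Tendsto ε l (𝓝 0))
    (hZL : Tendsto (fun i => ∫ ω, Z i ω ∂P) l (𝓝 L)) :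
    Tendsto (fun i => ∫ ω, Y i ω ∂P) l (𝓝 L) := by
  have hdiff : Tendsto (fun i => ∫ ω, Y i ω ∂P - ∫ ω, Z i ω ∂P) l (𝓝 0) := by
    refine squeeze_zero_norm' ?_ (by simpa using hε.mul_const (P.real Set.univ))
    filter_upwards [hY, hZ, hYZ] with i hYi hZi hYZi
    rw [← integral_sub hYi hZi]
    exact norm_integral_le_of_norm_le_const hYZi
  simpa using hdiff.add hZL

theorem integrable_exp_mul_of_nonpos [IsFiniteMeasure P] {X : Ω → ℝ} (hX : Measurable X)
    (hX0 : ∀ ω, 0 ≤ X ω) {c : ℝ} (hc : c ≤ 0) : Integrable (fun ω => exp (c * X ω)) P :=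
  .of_bound (by fun_prop) 1 (ae_of_all _ fun ω => by
    rw [norm_of_nonneg (exp_pos _).le, exp_le_one_iff]
    exact mul_nonpos_of_nonpos_of_nonneg hc (hX0 ω))

theorem exists_boundedContinuousFunction_eqOn_exp_mul {c : ℝ} (hc : c ≤ 0) :
    ∃ F : BoundedContinuousFunction ℝ ℝ, Set.EqOn F (fun x => exp (c * x)) (Set.Ici 0) := by
  have hmem : ∀ x, exp (c * max x 0) ∈ Set.Icc (0 : ℝ) 1 := fun x =>
    ⟨(exp_pos _).le, exp_le_one_iff.mpr (mul_nonpos_of_nonpos_of_nonneg hc (le_max_right x 0))⟩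
  exact ⟨.mkOfBound ⟨fun x => exp (c * max x 0), by fun_prop⟩ 1
      fun x y => dist_le_of_mem_Icc_01 (hmem x) (hmem y),
    fun x hx => by simp [max_eq_left (Set.mem_Ici.mp hx)]⟩

theorem tendsto_integral_exp_mul_of_tendsto_integral_comp {ι : Type*} {l : Filter ι}
    {X : ι → Ω → ℝ} {Y : Ω → ℝ} (hX0 : ∀ i ω, 0 ≤ X i ω) (hY0 : ∀ ω, 0 ≤ Y ω)
    (hXY : ∀ F : BoundedContinuousFunction ℝ ℝ,
      Tendsto (fun i => ∫ ω, F (X i ω) ∂P) l (𝓝 (∫ ω, F (Y ω) ∂P)))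
    {c : ℝ} (hc : c ≤ 0) :
    Tendsto (fun i => ∫ ω, exp (c * X i ω) ∂P) l (𝓝 (∫ ω, exp (c * Y ω) ∂P)) := by
  obtain ⟨F, hF⟩ := exists_boundedContinuousFunction_eqOn_exp_mul hc
  simpa only [fun i ω => hF (hX0 i ω), fun ω => hF (hY0 ω)] using hXY F

end Integral

theorem thinned_batch_mgf_convergence_general
    {Ω : Type*} [MeasurableSpace Ω] (P : Measure Ω) [IsProbabilityMeasure P]
    (p θ : ℝ) (hp0 : 0 ≤ p) (hθ : θ ≤ 0)
    (B : ℕ → Ω → ℕ) (hB : ∀ n, Measurable (B n))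
    (M : Ω → ℝ) (hM0 : ∀ ω, 0 ≤ M ω)
    -- `B(n)/n` converges in distribution to `M`
    (hconv : ∀ f : BoundedContinuousFunction ℝ ℝ,
      Tendsto (fun n : ℕ => ∫ ω, f ((B n ω : ℝ) / (n : ℝ)) ∂P) atTop
        (nhds (∫ ω, f (M ω) ∂P))) :
    Tendsto
      (fun n : ℕ => ∫ ω, (1 + p * (Real.exp (θ / (n : ℝ)) - 1)) ^ (B n ω) ∂P)
      atTop (nhds (∫ ω, Real.exp (θ * p * M ω) ∂P)) := by
  rcases (mul_nonpos_of_nonpos_of_nonneg hθ hp0).eq_or_lt with hc | hc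
  · have hbase : ∀ n : ℕ, 1 + p * (exp (θ / n) - 1) = 1 := by
      rcases mul_eq_zero.mp hc with rfl | rfl <;> simp
    simp [hbase, hc]
  set X : ℕ → Ω → ℝ := fun n ω => (B n ω : ℝ) / n
  have hX0 : ∀ n ω, 0 ≤ X n ω := fun n ω => by positivity
  have hXm : ∀ n, Measurable (X n) := fun n => (measurable_from_nat.comp (hB n)).div_const _
  set a : ℕ → ℝ := fun n => n * log (1 + p * (exp (θ / n) - 1))
  have ha : Tendsto a atTop (𝓝 (θ * p)) :=
    tendsto_natCast_mul_log_one_add_mul_exp_div_sub_one p θ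
  have ha_le : ∀ᶠ n in atTop, a n ≤ θ * p / 2 := ha.eventually (ge_mem_nhds (by linarith))
  have hpow : ∀ᶠ n : ℕ in atTop, (fun ω => (1 + p * (exp (θ / n) - 1)) ^ B n ω)
      = fun ω => exp (a n * X n ω) := by
    filter_upwards [eventually_pos_one_add_mul_exp_div_sub_one p θ, eventually_ne_atTop 0]
      with n hb hn
    exact funext fun ω => pow_eq_exp_div_mul_mul_log hb _ (Nat.cast_ne_zero.mpr hn)
  refine (tendsto_integral_of_norm_sub_le (Y := fun n ω => exp (a n * X n ω))
    (Z := fun n ω => exp (θ * p * X n ω))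
    (ε := fun n => |a n - θ * p| * (-(θ * p / 2))⁻¹) ?_ ?_ ?_ ?_
    (tendsto_integral_exp_mul_of_tendsto_integral_comp hX0 hM0 hconv hc.le)).congr'
    (hpow.mono fun n h => by dsimp only; rw [h])
  · filter_upwards [ha_le] with n hn
    exact integrable_exp_mul_of_nonpos (hXm n) (hX0 n) (by linarith)
  · exact .of_forall fun n => integrable_exp_mul_of_nonpos (hXm n) (hX0 n) hc.le
  · filter_upwards [ha_le] with n hn
    exact ae_of_all _ fun ω => abs_exp_mul_sub_exp_mul_le (hX0 n ω) hn (by linarith) (by linarith)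
  · simpa using ((ha.sub_const (θ * p)).abs.mul_const (-(θ * p / 2))⁻¹)

/-- Moment-generating-function convergence of thinned batches under batch scaling: if
`B(n)/n` converges in distribution to the non-negative random variable `M`, then for
`p ∈ [0,1]` and `θ ≤ 0`,
`E[(1 + p(e^{θ/n} − 1))^{B(n)}] → E[e^{θ p M}]`. -/
theorem thinned_batch_mgf_convergence
    {Ω : Type*} [MeasurableSpace Ω] (P : Measure Ω) [IsProbabilityMeasure P]
    (p θ : ℝ) (hp0 : 0 ≤ p) (hp1 : p ≤ 1) (hθ : θ ≤ 0)
    (B : ℕ → Ω → ℕ) (hB : ∀ n, Measurable (B n))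
    (M : Ω → ℝ) (hM : Measurable M) (hM0 : ∀ ω, 0 ≤ M ω)
    -- `B(n)/n` converges in distribution to `M`
    (hconv : ∀ f : BoundedContinuousFunction ℝ ℝ,
      Tendsto (fun n : ℕ => ∫ ω, f ((B n ω : ℝ) / (n : ℝ)) ∂P) atTop
        (nhds (∫ ω, f (M ω) ∂P))) :
    Tendsto
      (fun n : ℕ => ∫ ω, (1 + p * (Real.exp (θ / (n : ℝ)) - 1)) ^ (B n ω) ∂P)
      atTop (nhds (∫ ω, Real.exp (θ * p * M ω) ∂P)) :=
  thinned_batch_mgf_convergence_general P p θ hp0 hθ B hB M hM0 hconv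
end
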